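/- arXiv:2303.09351 — 12 statements merged into one kernel-verified Lean document; each statement's English description precedes it below -/
import Mathlib

section
/- Let k:[0,∞)→ℝ be continuous, increasing, twice differentiable on (0,∞), k(0)=0, lim_{c→∞}k(c)=k_max<∞, and sigmoidal: there exists c_infl>0 with k''(c)>0 for 0<c<c_infl and k''(c)<0 for c>c_infl. Let r>0 with k_max>r. Then f_r(c)=(k(c)-r)/c has a unique critical point c_opt on (0,∞), which is a global maximizer, and moreover c_opt>c_infl. -/
/-- Sigmoidal case of Lemma `fmax`: under (A1),(A2), sigmoidality (A3)(ii),
and `k_max > r > 0`, the function `f_r(c) = (k c - r)/c` has a unique critical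
point `c_opt` on `(0,∞)`, which is a global maximizer, and `c_opt > c_infl`. -/
theorem stmt_1 (k k' k'' : ℝ → ℝ) (kmax r cinfl : ℝ)
    (hk0 : k 0 = 0)
    (hcont : ContinuousOn k (Set.Ici 0))
    (hmono : StrictMonoOn k (Set.Ici 0))
    (hd1 : ∀ c > (0:ℝ), HasDerivAt k (k' c) c)
    (hd2 : ∀ c > (0:ℝ), HasDerivAt k' (k'' c) c)
    (hlim : Filter.Tendsto k Filter.atTop (nhds kmax))
    (hcinfl : 0 < cinfl)
    (hsig1 : ∀ c : ℝ, 0 < c → c < cinfl → 0 < k'' c)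
    (hsig2 : ∀ c : ℝ, cinfl < c → k'' c < 0)
    (hr : 0 < r) (hkr : r < kmax) :
    ∃! c : ℝ, 0 < c ∧ k' c = (k c - r) / c ∧
      (∀ x : ℝ, 0 < x → (k x - r) / x ≤ (k c - r) / c) ∧ cinfl < c := by
  set f : ℝ → ℝ := fun c => (k c - r) / c with hf
  -- k is everywhere below kmax
  have hklt : ∀ c, 0 ≤ c → k c < kmax := by
    intro c hc
    have h1 : k c < k (c + 1) := hmono hc (by simp; linarith) (by linarith)
    have h2 : k (c + 1) ≤ kmax := by
      apply ge_of_tendsto hlim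
      filter_upwards [Filter.eventually_ge_atTop (c + 1)] with x hx
      exact hmono.monotoneOn (by simp; linarith) (by simp; linarith) hx
    linarith
  -- a point where k exceeds r
  have hev1 : ∀ᶠ c in Filter.atTop, r < k c := hlim.eventually (eventually_gt_nhds hkr)
  obtain ⟨c₀, hc₀r, hc₀1⟩ := (hev1.and (Filter.eventually_ge_atTop 1)).exists
  have hc₀pos : (0:ℝ) < c₀ := by linarith
  have hfc₀ : 0 < f c₀ := div_pos (by linarith) hc₀pos
  -- a small ε with k ε < r
  have hcont0 : Filter.Tendsto k (nhdsWithin 0 (Set.Ici 0)) (nhds 0) := by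
    have := hcont 0 Set.self_mem_Ici
    rwa [ContinuousWithinAt, hk0] at this
  have hev2 : ∀ᶠ x in nhdsWithin 0 (Set.Ici 0), k x < r :=
    hcont0.eventually (eventually_lt_nhds hr)
  rw [eventually_nhdsWithin_iff] at hev2
  obtain ⟨δ, hδpos, hδ⟩ := Metric.eventually_nhds_iff.mp hev2
  set ε : ℝ := δ / 2 with hε
  have hεpos : 0 < ε := by positivity
  have hkε : k ε < r := by
    apply hδ (by rw [Real.dist_eq]; rw [abs_of_pos (by linarith)]; simp; linarith)
    exact le_of_lt hεpos
  have hεc₀ : ε < c₀ := by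
    by_contra hcon
    push_neg at hcon
    have := hmono.monotoneOn (le_of_lt hc₀pos) (le_of_lt hεpos) hcon
    linarith
  -- choose N
  set N : ℝ := max c₀ ((kmax - r) / f c₀ + 1) with hN
  have hc₀N : c₀ ≤ N := le_max_left _ _
  have hNpos : 0 < N := lt_of_lt_of_le hc₀pos hc₀N
  have hNbig : (kmax - r) / f c₀ < N := lt_of_lt_of_le (by linarith) (le_max_right _ _)
  have hNkey : (kmax - r) / N < f c₀ := by
    rw [div_lt_iff₀ hNpos]
    rw [div_lt_iff₀ hfc₀] at hNbig
    linarith [mul_comm (f c₀) N]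
  -- tail bound
  have htail : ∀ x, N ≤ x → f x < f c₀ := by
    intro x hx
    have hxpos : 0 < x := lt_of_lt_of_le hNpos hx
    have h1 : (k x - r) / x < (kmax - r) / N := by
      rw [div_lt_div_iff₀ hxpos hNpos]
      nlinarith [hklt x (le_of_lt hxpos)]
    exact lt_trans h1 hNkey
  -- maximize on the compact interval
  have hsub : Set.Icc ε N ⊆ Set.Ici 0 := fun x hx => le_trans (le_of_lt hεpos) hx.1
  have hfcont : ContinuousOn f (Set.Icc ε N) := by
    apply ContinuousOn.div ((hcont.mono hsub).sub continuousOn_const) continuousOn_id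
    intro x hx
    exact ne_of_gt (lt_of_lt_of_le hεpos hx.1)
  have hc₀mem : c₀ ∈ Set.Icc ε N := ⟨le_of_lt hεc₀, hc₀N⟩
  obtain ⟨c, hcmem, hcmax⟩ := isCompact_Icc.exists_isMaxOn ⟨c₀, hc₀mem⟩ hfcont
  have hfc₀c : f c₀ ≤ f c := hcmax hc₀mem
  have hfε : f ε < 0 := div_neg_of_neg_of_pos (by linarith) hεpos
  have hcne1 : c ≠ ε := by
    intro h; rw [h] at hfc₀c; linarith
  have hcne2 : c ≠ N := by
    intro h
    have := htail N le_rfl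
    rw [h] at hfc₀c; linarith
  have hcpos : 0 < c := lt_of_lt_of_le hεpos hcmem.1
  have hclt1 : ε < c := lt_of_le_of_ne hcmem.1 (Ne.symm hcne1)
  have hclt2 : c < N := lt_of_le_of_ne hcmem.2 hcne2
  -- global maximality
  have hglob : ∀ x, 0 < x → f x ≤ f c := by
    intro x hx
    rcases le_or_gt x ε with hxε | hxε
    · have h1 : f x ≤ f ε := by
        rw [hf]
        simp only
        rw [div_le_div_iff₀ hx hεpos]
        have hkxε : k x ≤ k ε := hmono.monotoneOn (le_of_lt hx) (le_of_lt hεpos) hxε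
        nlinarith
      exact le_trans h1 (hcmax ⟨le_refl ε, by linarith⟩)
    · rcases le_or_gt x N with hxN | hxN
      · exact hcmax ⟨le_of_lt hxε, hxN⟩
      · exact le_trans (le_of_lt (htail x (le_of_lt hxN))) hfc₀c
  -- critical point equation
  have hlocal : IsLocalMax f c := hcmax.isLocalMax (Icc_mem_nhds hclt1 hclt2)
  have hder : HasDerivAt f ((k' c * c - (k c - r) * 1) / c ^ 2) c := by
    have := ((hd1 c hcpos).sub_const r).div (hasDerivAt_id c) (ne_of_gt hcpos)
    simp at this; rw [mul_one]; exact this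
  have hzero := hlocal.hasDerivAt_eq_zero hder
  have hcrit : k' c = (k c - r) / c := by
    have hc2 : c ^ 2 ≠ 0 := pow_ne_zero 2 (ne_of_gt hcpos)
    field_simp at hzero ⊢
    linarith
  -- k' is strictly monotone on (0, cinfl]
  have hk'mono : StrictMonoOn k' (Set.Ioc 0 cinfl) := by
    apply strictMonoOn_of_deriv_pos (convex_Ioc _ _)
    · exact fun x hx => ((hd2 x hx.1).continuousAt).continuousWithinAt
    · intro x hx
      rw [interior_Ioc] at hx
      rw [(hd2 x hx.1).deriv]
      exact hsig1 x hx.1 hx.2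
  -- c > cinfl
  have hccinfl : cinfl < c := by
    by_contra hcon
    push_neg at hcon
    have hanti : StrictAntiOn (fun x => k x - k' c * x) (Set.Icc 0 c) := by
      apply strictAntiOn_of_deriv_neg (convex_Icc _ _)
      · exact (hcont.mono Set.Icc_subset_Ici_self).sub
          ((continuous_const.mul continuous_id).continuousOn)
      · intro x hx
        rw [interior_Icc] at hx
        have hdx : HasDerivAt (fun x => k x - k' c * x) (k' x - k' c * 1) x :=
          (hd1 x hx.1).sub ((hasDerivAt_id x).const_mul (k' c))
        rw [hdx.deriv]
        have := hk'mono ⟨hx.1, le_trans (le_of_lt hx.2) hcon⟩ ⟨hcpos, hcon⟩ hx.2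
        linarith
    have h2 := hanti (Set.left_mem_Icc.mpr (le_of_lt hcpos))
      (Set.right_mem_Icc.mpr (le_of_lt hcpos)) hcpos
    simp only [hk0] at h2
    have h3 : k' c * c = k c - r := by
      rw [hcrit]; field_simp
    nlinarith
  -- k' is strictly antitone on [cinfl, ∞)
  have hk'anti : StrictAntiOn k' (Set.Ici cinfl) := by
    apply strictAntiOn_of_deriv_neg (convex_Ici _)
    · exact fun x hx => ((hd2 x (lt_of_lt_of_le hcinfl hx)).continuousAt).continuousWithinAt
    · intro x hx
      rw [interior_Ici] at hx
      rw [(hd2 x (hcinfl.trans hx)).deriv]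
      exact hsig2 x hx
  refine ⟨c, ⟨hcpos, hcrit, hglob, hccinfl⟩, ?_⟩
  rintro y ⟨hy, hycrit, hymax, hycinfl⟩
  have hfy : (k y - r) / y = (k c - r) / c :=
    le_antisymm (hglob y hy) (hymax c hcpos)
  have : k' y = k' c := by rw [hycrit, hcrit, hfy]
  exact hk'anti.injOn (le_of_lt hycinfl) (le_of_lt hccinfl) this
end

section
/- Under (A1)-(A3) and k_max>r, let C:[0,∞)→[0,∞) be integrable, let LR_target>0, and suppose there exists T*>0 with (1/ln 10)·∫₀^{T*}[k(C(t))−r]dt = LR_target. Then ∫₀^∞ C(t)dt ≥ ln(10)·LR_target·c_opt/(k(c_opt)−r), where c_opt is the global maximizer of (k(c)−r)/c. -/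
open MeasureTheory

/-! Since `c_opt` maximizes `(k c - r) / c`, the line through the origin of slope
`(k c_opt - r) / c_opt` lies above `k - r` on `[0, ∞)`. Integrating this along the profile bounds
the log-reduction `ln 10 · LR_target` by the slope times the AUC; as the log-reduction is positive,
so is the slope, and the bound can be divided through. -/

lemma le_mul_of_forall_div_le {g : ℝ → ℝ} {s : ℝ} (hg0 : g 0 ≤ 0)
    (hdiv : ∀ x, 0 < x → g x / x ≤ s) {x : ℝ} (hx : 0 ≤ x) : g x ≤ s * x := by
  rcases hx.eq_or_lt with rfl | hx
  · simpa using hg0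
  · simpa only [mul_comm] using (div_le_iff₀ hx).1 (hdiv x hx)

lemma setIntegral_le_mul_setIntegral {α : Type*} [MeasurableSpace α] {μ : Measure α}
    {f g : α → ℝ} {s : Set α} {c : ℝ} (hs : MeasurableSet s)
    (hf : IntegrableOn f s μ) (hg : IntegrableOn g s μ) (hfg : ∀ x ∈ s, f x ≤ c * g x) :
    ∫ x in s, f x ∂μ ≤ c * ∫ x in s, g x ∂μ := by
  rw [← integral_const_mul]
  exact setIntegral_mono_on hf (hg.const_mul c) hs hfg

theorem stmt_5_general (k : ℝ → ℝ) (r copt LRtarget : ℝ)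
    (hk0 : k 0 = 0)
    (hr : 0 < r)
    (hcopt : 0 < copt)
    (hmax : ∀ x : ℝ, 0 < x → (k x - r) / x ≤ (k copt - r) / copt)
    (hLR : 0 < LRtarget)
    (C : ℝ → ℝ)
    (hCpos : ∀ t, 0 ≤ C t)
    (hCint : IntegrableOn C (Set.Ioi 0))
    (hkCint : ∀ T > (0:ℝ), IntegrableOn (fun t => k (C t) - r) (Set.Ioc 0 T))
    (Tstar : ℝ) (hTstar : 0 < Tstar)
    (herad : (1 / Real.log 10) * ∫ t in Set.Ioc 0 Tstar, (k (C t) - r) = LRtarget) :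
    Real.log 10 * LRtarget * copt / (k copt - r) ≤ ∫ t in Set.Ioi 0, C t := by
  set slope := (k copt - r) / copt
  have hln : 0 < Real.log 10 := Real.log_pos (by norm_num)
  have hreduction : ∫ t in Set.Ioc 0 Tstar, (k (C t) - r) = Real.log 10 * LRtarget := by
    rw [← herad]; field_simp
  have hbound : Real.log 10 * LRtarget ≤ slope * ∫ t in Set.Ioc 0 Tstar, C t :=
    hreduction ▸ setIntegral_le_mul_setIntegral measurableSet_Ioc (hkCint Tstar hTstar)
      (hCint.mono_set Set.Ioc_subset_Ioi_self) fun t _ =>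
        le_mul_of_forall_div_le (by simp [hk0, hr.le]) hmax (hCpos t)
  have hAUC : ∫ t in Set.Ioc 0 Tstar, C t ≤ ∫ t in Set.Ioi 0, C t :=
    setIntegral_mono_set hCint (.of_forall hCpos) (.of_forall Set.Ioc_subset_Ioi_self)
  have hslope : 0 < slope :=
    pos_of_mul_pos_left ((mul_pos hln hLR).trans_le hbound) (setIntegral_nonneg measurableSet_Ioc
      fun t _ => hCpos t)
  have hden : 0 < k copt - r := (div_pos_iff_of_pos_right hcopt).1 hslope
  rw [div_le_iff₀ hden]
  calc Real.log 10 * LRtarget * copt ≤ slope * (∫ t in Set.Ioc 0 Tstar, C t) * copt :=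
        mul_le_mul_of_nonneg_right hbound hcopt.le
    _ = (∫ t in Set.Ioc 0 Tstar, C t) * (k copt - r) := by
        simp only [slope]; field_simp
    _ ≤ (∫ t in Set.Ioi 0, C t) * (k copt - r) := mul_le_mul_of_nonneg_right hAUC hden.le

/-- Lower bound on the AUC: under (A1)-(A3) and `k_max > r > 0`, any nonnegative
integrable concentration profile `C` achieving the log-reduction `LR_target` at
some time `T* > 0` satisfies
`∫₀^∞ C ≥ ln(10)·LR_target·c_opt/(k(c_opt) − r)`. -/
theorem stmt_5 (k k' k'' : ℝ → ℝ) (kmax r copt LRtarget : ℝ)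
    (hk0 : k 0 = 0)
    (hcont : ContinuousOn k (Set.Ici 0))
    (hmono : StrictMonoOn k (Set.Ici 0))
    (hd1 : ∀ c > (0:ℝ), HasDerivAt k (k' c) c)
    (hd2 : ∀ c > (0:ℝ), HasDerivAt k' (k'' c) c)
    (hlim : Filter.Tendsto k Filter.atTop (nhds kmax))
    (hA3 : (∀ c > (0:ℝ), k'' c < 0) ∨
      (∃ cinfl > (0:ℝ), (∀ c : ℝ, 0 < c → c < cinfl → 0 < k'' c) ∧
        (∀ c : ℝ, cinfl < c → k'' c < 0)))
    (hr : 0 < r) (hkr : r < kmax)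
    (hcopt : 0 < copt)
    (hmax : ∀ x : ℝ, 0 < x → (k x - r) / x ≤ (k copt - r) / copt)
    (hLR : 0 < LRtarget)
    (C : ℝ → ℝ)
    (hCpos : ∀ t, 0 ≤ C t)
    (hCint : IntegrableOn C (Set.Ioi 0))
    (hkCint : ∀ T > (0:ℝ), IntegrableOn (fun t => k (C t) - r) (Set.Ioc 0 T))
    (Tstar : ℝ) (hTstar : 0 < Tstar)
    (herad : (1 / Real.log 10) * ∫ t in Set.Ioc 0 Tstar, (k (C t) - r) = LRtarget) :
    Real.log 10 * LRtarget * copt / (k copt - r) ≤ ∫ t in Set.Ioi 0, C t :=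
  stmt_5_general k r copt LRtarget hk0 hr hcopt hmax hLR C hCpos hCint hkCint Tstar hTstar herad
end

section
/- Under (A1)-(A3) and k_max>r, the constant profile C_opt(t)=c_opt for 0≤t≤T_opt and 0 for t>T_opt, with T_opt = ln(10)·LR_target/(k(c_opt)−r), satisfies (1/ln10)·∫₀^{T_opt}[k(C_opt(t))−r]dt = LR_target and ∫₀^∞ C_opt(t)dt = ln(10)·LR_target·c_opt/(k(c_opt)−r), hence achieves the minimal AUC among profiles achieving log-reduction LR_target. -/
open MeasureTheory

/-- The `ideal` constant concentration profile `C_opt` (value `c_opt` on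
`[0, T_opt]`, `0` afterwards, with `T_opt = ln(10)·LR_target/(k(c_opt)−r)`)
achieves the log-reduction `LR_target` and has
`AUC = ln(10)·LR_target·c_opt/(k(c_opt)−r)`, the minimal AUC among all
nonnegative integrable profiles achieving log-reduction `LR_target`. -/
theorem stmt_6 (k k' k'' : ℝ → ℝ) (kmax r copt LRtarget : ℝ)
    (hk0 : k 0 = 0)
    (hcont : ContinuousOn k (Set.Ici 0))
    (hmono : StrictMonoOn k (Set.Ici 0))
    (hd1 : ∀ c > (0:ℝ), HasDerivAt k (k' c) c)
    (hd2 : ∀ c > (0:ℝ), HasDerivAt k' (k'' c) c)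
    (hlim : Filter.Tendsto k Filter.atTop (nhds kmax))
    (hA3 : (∀ c > (0:ℝ), k'' c < 0) ∨
      (∃ cinfl > (0:ℝ), (∀ c : ℝ, 0 < c → c < cinfl → 0 < k'' c) ∧
        (∀ c : ℝ, cinfl < c → k'' c < 0)))
    (hr : 0 < r) (hkr : r < kmax)
    (hcopt : 0 < copt)
    (hmax : ∀ x : ℝ, 0 < x → (k x - r) / x ≤ (k copt - r) / copt)
    (hLR : 0 < LRtarget)
    (Topt : ℝ) (hTopt : Topt = Real.log 10 * LRtarget / (k copt - r))
    (Copt : ℝ → ℝ)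
    (hCopt : Copt = fun t => if 0 ≤ t ∧ t ≤ Topt then copt else 0) :
    (1 / Real.log 10) * ∫ t in Set.Ioc 0 Topt, (k (Copt t) - r) = LRtarget ∧
    ∫ t in Set.Ioi 0, Copt t = Real.log 10 * LRtarget * copt / (k copt - r) ∧
    ∀ C : ℝ → ℝ, (∀ t, 0 ≤ C t) → IntegrableOn C (Set.Ioi 0) →
      (∀ T > (0:ℝ), IntegrableOn (fun t => k (C t) - r) (Set.Ioc 0 T)) →
      (∃ T > (0:ℝ), (1 / Real.log 10) * ∫ t in Set.Ioc 0 T, (k (C t) - r) = LRtarget) →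
      ∫ t in Set.Ioi 0, Copt t ≤ ∫ t in Set.Ioi 0, C t := by

  have hlog : (0:ℝ) < Real.log 10 := Real.log_pos (by norm_num)
  -- k copt - r > 0
  have hM : 0 < (k copt - r) / copt := by
    have h1 : ∀ᶠ x in Filter.atTop, r < k x := hlim.eventually (eventually_gt_nhds hkr)
    obtain ⟨x, hx1, hx2⟩ := (h1.and (Filter.eventually_gt_atTop 0)).exists
    exact lt_of_lt_of_le (div_pos (sub_pos.2 hx1) hx2) (hmax x hx2)
  have hkc : 0 < k copt - r := by
    have := mul_pos hM hcopt
    rwa [div_mul_cancel₀ _ (ne_of_gt hcopt)] at this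
  have hTpos : 0 < Topt := by
    rw [hTopt]; positivity
  -- first integral
  have hI1 : (∫ t in Set.Ioc 0 Topt, (k (Copt t) - r)) = Topt * (k copt - r) := by
    rw [setIntegral_congr_fun measurableSet_Ioc (g := fun _ => k copt - r)
      (fun t ht => by simp [hCopt, ht.1.le, ht.2]), setIntegral_const,
      Real.volume_real_Ioc_of_le hTpos.le, smul_eq_mul, sub_zero]
  have hTmul : Topt * (k copt - r) = Real.log 10 * LRtarget := by
    rw [hTopt, div_mul_cancel₀ _ (ne_of_gt hkc)]
  have hI2 : (∫ t in Set.Ioi 0, Copt t) = Real.log 10 * LRtarget * copt / (k copt - r) := by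
    have hind : Copt = Set.indicator (Set.Icc 0 Topt) (fun _ => copt) := by
      rw [hCopt]; ext t
      by_cases h : 0 ≤ t ∧ t ≤ Topt
      · simp [Set.indicator_apply, Set.mem_Icc, h]
      · simp [Set.indicator_apply, Set.mem_Icc, h]
    have hset : Set.Ioi (0:ℝ) ∩ Set.Icc 0 Topt = Set.Ioc 0 Topt := by
      ext t; simp [Set.mem_Ioc, Set.mem_Icc, and_assoc]
      intro ht; simp [ht.le]
    rw [hind, setIntegral_indicator measurableSet_Icc, hset, setIntegral_const,
      Real.volume_real_Ioc_of_le hTpos.le, smul_eq_mul, sub_zero, hTopt]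
    field_simp
  refine ⟨by rw [hI1, hTmul]; field_simp, hI2, ?_⟩
  intro C hCnn hCint hCint2 ⟨T, hT, hTeq⟩
  set M := (k copt - r) / copt with hMdef
  have hkey : ∀ c : ℝ, 0 ≤ c → k c - r ≤ M * c := by
    intro c hc
    rcases hc.lt_or_eq with h | h
    · exact (div_le_iff₀ h).mp (hmax c h)
    · simp [← h, hk0, hr.le]
  have hTeq' : (∫ t in Set.Ioc 0 T, (k (C t) - r)) = Real.log 10 * LRtarget := by
    have := hTeq
    field_simp at this
    linarith [this]
  have hMCint : IntegrableOn (fun t => M * C t) (Set.Ioc 0 T) :=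
    ((hCint.mono_set Set.Ioc_subset_Ioi_self).const_mul M)
  have step1 : Real.log 10 * LRtarget ≤ ∫ t in Set.Ioc 0 T, M * C t := by
    rw [← hTeq']
    exact integral_mono (hCint2 T hT) hMCint (fun t => hkey (C t) (hCnn t))
  have step2 : (∫ t in Set.Ioc 0 T, M * C t) = M * ∫ t in Set.Ioc 0 T, C t := by
    exact integral_const_mul M C
  have step3 : (∫ t in Set.Ioc 0 T, C t) ≤ ∫ t in Set.Ioi 0, C t :=
    setIntegral_mono_set hCint
      (Filter.Eventually.of_forall fun t => hCnn t)
      (HasSubset.Subset.eventuallyLE Set.Ioc_subset_Ioi_self)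
  have hfinal : Real.log 10 * LRtarget ≤ M * ∫ t in Set.Ioi 0, C t := by
    calc Real.log 10 * LRtarget ≤ ∫ t in Set.Ioc 0 T, M * C t := step1
      _ = M * ∫ t in Set.Ioc 0 T, C t := step2
      _ ≤ M * ∫ t in Set.Ioi 0, C t := by
          exact mul_le_mul_of_nonneg_left step3 hM.le
  rw [hI2]
  calc Real.log 10 * LRtarget * copt / (k copt - r)
      = Real.log 10 * LRtarget / M := by rw [hMdef]; field_simp
    _ ≤ _ := (div_le_iff₀' hM).mpr hfinal
end

section
/- Under (A1)-(A3) and k_max>r, if C:[0,∞)→[0,∞) is integrable, achieves max_T (1/ln10)∫₀^T[k(C(t))−r]dt = LR_target, and its AUC equals the minimal value ln(10)·LR_target·c_opt/(k(c_opt)−r), then C(t)=c_opt for almost every t in [0,T_opt] and C(t)=0 for almost every t>T_opt, where T_opt=ln(10)·LR_target/(k(c_opt)−r). -/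
open MeasureTheory

lemma unique_max_aux (k k' k'' : ℝ → ℝ) (r copt : ℝ)
    (hd1 : ∀ c > (0:ℝ), HasDerivAt k (k' c) c)
    (hd2 : ∀ c > (0:ℝ), HasDerivAt k' (k'' c) c)
    (hA3 : (∀ c > (0:ℝ), k'' c < 0) ∨
      (∃ cinfl > (0:ℝ), (∀ c : ℝ, 0 < c → c < cinfl → 0 < k'' c) ∧
        (∀ c : ℝ, cinfl < c → k'' c < 0)))
    (hcopt : 0 < copt)
    (hmax : ∀ x : ℝ, 0 < x → (k x - r) / x ≤ (k copt - r) / copt)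
    (c : ℝ) (hc : 0 < c)
    (hceq : (k c - r) / c = (k copt - r) / copt) :
    c = copt := by
  set g : ℝ → ℝ := fun x => (k x - r) / x with hgdef
  set h : ℝ → ℝ := fun x => k' x * x - (k x - r) with hhdef
  have hgd : ∀ x > (0:ℝ), HasDerivAt g (h x / x ^ 2) x := by
    intro x hx
    have := ((hd1 x hx).sub_const r).div (hasDerivAt_id x) (ne_of_gt hx)
    exact this.congr_deriv (by simp [hhdef])
  have hhd : ∀ x > (0:ℝ), HasDerivAt h (k'' x * x) x := by
    intro x hx
    have := ((hd2 x hx).mul (hasDerivAt_id x)).sub ((hd1 x hx).sub_const r)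
    exact this.congr_deriv (by simp)
  have hcrit : ∀ m : ℝ, 0 < m → g m = g copt → h m = 0 := by
    intro m hm hgm
    have hloc : IsLocalMax g m := by
      filter_upwards [Ioi_mem_nhds hm] with x hx
      calc g x ≤ g copt := hmax x hx
      _ = g m := hgm.symm
    have h0 : deriv g m = 0 := hloc.deriv_eq_zero
    rw [(hgd m hm).deriv] at h0
    have hm2 : (m:ℝ) ^ 2 ≠ 0 := by positivity
    field_simp at h0
    simpa using h0
  by_contra hne
  set a := min c copt with hadef
  set b := max c copt with hbdef
  have ha0 : 0 < a := lt_min hc hcopt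
  have hab : a < b := min_lt_max.2 hne
  have hgc : g c = g copt := hceq
  have hgab : g a = g b := by
    rcases le_total c copt with hle | hle
    · simp [hadef, hbdef, min_eq_left hle, max_eq_right hle, hgc]
    · simp [hadef, hbdef, min_eq_right hle, max_eq_left hle, hgc]
  have hha : h a = 0 := by
    rcases le_total c copt with hle | hle
    · simpa [hadef, min_eq_left hle] using hcrit c hc hgc
    · simpa [hadef, min_eq_right hle] using hcrit copt hcopt rfl
  have hhb : h b = 0 := by
    rcases le_total c copt with hle | hle
    · simpa [hbdef, max_eq_right hle] using hcrit copt hcopt rfl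
    · simpa [hbdef, max_eq_left hle] using hcrit c hc hgc
  have hposmid : ∀ x ∈ Set.Ioo a b, 0 < h x := by
    rcases hA3 with hcc | ⟨cinfl, hci, hpos, hneg⟩
    · intro x hx
      exfalso
      have hanti : StrictAntiOn h (Set.Ioi 0) := by
        apply strictAntiOn_of_deriv_neg (convex_Ioi 0)
        · intro y hy; exact (hhd y hy).continuousAt.continuousWithinAt
        · intro y hy
          rw [interior_Ioi] at hy
          rw [(hhd y hy).deriv]
          exact mul_neg_of_neg_of_pos (hcc y hy) hy
      have := hanti (Set.mem_Ioi.2 ha0) (Set.mem_Ioi.2 (ha0.trans hab)) hab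
      rw [hha, hhb] at this
      exact lt_irrefl 0 this
    · have hmono1 : StrictMonoOn h (Set.Ioc 0 cinfl) := by
        apply strictMonoOn_of_deriv_pos (convex_Ioc 0 cinfl)
        · intro y hy; exact (hhd y hy.1).continuousAt.continuousWithinAt
        · intro y hy
          rw [interior_Ioc] at hy
          rw [(hhd y hy.1).deriv]
          exact mul_pos (hpos y hy.1 hy.2) hy.1
      have hanti1 : StrictAntiOn h (Set.Ici cinfl) := by
        apply strictAntiOn_of_deriv_neg (convex_Ici cinfl)
        · intro y hy; exact (hhd y (hci.trans_le hy)).continuousAt.continuousWithinAt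
        · intro y hy
          rw [interior_Ici] at hy
          rw [(hhd y (hci.trans hy)).deriv]
          exact mul_neg_of_neg_of_pos (hneg y hy) (hci.trans hy)
      intro x hx
      rcases le_or_gt x cinfl with hxc | hxc
      · have : h a < h x :=
          hmono1 ⟨ha0, hx.1.le.trans hxc⟩ ⟨ha0.trans hx.1, hxc⟩ hx.1
        rw [hha] at this; exact this
      · have : h b < h x :=
          hanti1 (Set.mem_Ici.2 hxc.le) (Set.mem_Ici.2 (hxc.le.trans hx.2.le)) hx.2
        rw [hhb] at this; exact this
  have hgmono : StrictMonoOn g (Set.Icc a b) := by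
    apply strictMonoOn_of_deriv_pos (convex_Icc a b)
    · intro y hy; exact (hgd y (ha0.trans_le hy.1)).continuousAt.continuousWithinAt
    · intro y hy
      rw [interior_Icc] at hy
      rw [(hgd y (ha0.trans hy.1)).deriv]
      exact div_pos (hposmid y hy) (by nlinarith [ha0.trans hy.1])
  have := hgmono (Set.left_mem_Icc.2 hab.le) (Set.right_mem_Icc.2 hab.le) hab
  rw [hgab] at this
  exact lt_irrefl _ this

/-- Uniqueness part of Theorem 1: under (A1)-(A3) and `k_max > r > 0`, any
nonnegative integrable profile whose maximal log-reduction equals `LR_target`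
and whose AUC equals the minimal value `ln(10)·LR_target·c_opt/(k(c_opt)−r)`
must equal `c_opt` a.e. on `(0, T_opt]` and `0` a.e. on `(T_opt, ∞)`. -/
theorem stmt_7 (k k' k'' : ℝ → ℝ) (kmax r copt LRtarget : ℝ)
    (hk0 : k 0 = 0)
    (hcont : ContinuousOn k (Set.Ici 0))
    (hmono : StrictMonoOn k (Set.Ici 0))
    (hd1 : ∀ c > (0:ℝ), HasDerivAt k (k' c) c)
    (hd2 : ∀ c > (0:ℝ), HasDerivAt k' (k'' c) c)
    (hlim : Filter.Tendsto k Filter.atTop (nhds kmax))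
    (hA3 : (∀ c > (0:ℝ), k'' c < 0) ∨
      (∃ cinfl > (0:ℝ), (∀ c : ℝ, 0 < c → c < cinfl → 0 < k'' c) ∧
        (∀ c : ℝ, cinfl < c → k'' c < 0)))
    (hr : 0 < r) (hkr : r < kmax)
    (hcopt : 0 < copt)
    (hmax : ∀ x : ℝ, 0 < x → (k x - r) / x ≤ (k copt - r) / copt)
    (hLR : 0 < LRtarget)
    (Topt : ℝ) (hTopt : Topt = Real.log 10 * LRtarget / (k copt - r))
    (C : ℝ → ℝ)
    (hCpos : ∀ t, 0 ≤ C t)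
    (hCint : IntegrableOn C (Set.Ioi 0))
    (hkCint : ∀ T > (0:ℝ), IntegrableOn (fun t => k (C t) - r) (Set.Ioc 0 T))
    (hachieve : ∃ T > (0:ℝ),
      (1 / Real.log 10) * ∫ t in Set.Ioc 0 T, (k (C t) - r) = LRtarget)
    (hmaxLR : ∀ T > (0:ℝ),
      (1 / Real.log 10) * ∫ t in Set.Ioc 0 T, (k (C t) - r) ≤ LRtarget)
    (hAUC : ∫ t in Set.Ioi 0, C t = Real.log 10 * LRtarget * copt / (k copt - r)) :
    (∀ᵐ t : ℝ, t ∈ Set.Ioc 0 Topt → C t = copt) ∧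
    (∀ᵐ t : ℝ, t ∈ Set.Ioi Topt → C t = 0) := by
  have hlog : (0:ℝ) < Real.log 10 := Real.log_pos (by norm_num)
  set M := (k copt - r) / copt with hM
  have hMpos : 0 < M := by
    obtain ⟨x, hx0, hxr⟩ : ∃ x : ℝ, 0 < x ∧ r < k x := by
      have h1 : ∀ᶠ x in Filter.atTop, r < k x := hlim.eventually (eventually_gt_nhds hkr)
      have h2 : ∀ᶠ x in Filter.atTop, (0:ℝ) < x := Filter.eventually_gt_atTop 0
      obtain ⟨x, hx2, hx1⟩ := (h2.and h1).exists
      exact ⟨x, hx2, hx1⟩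
    exact lt_of_lt_of_le (div_pos (sub_pos.2 hxr) hx0) (hmax x hx0)
  have hkcr : 0 < k copt - r := by
    have := mul_pos hMpos hcopt
    rwa [hM, div_mul_cancel₀ _ (ne_of_gt hcopt)] at this
  -- pointwise bound
  have hptwise : ∀ t, k (C t) - r ≤ M * C t := by
    intro t
    rcases eq_or_lt_of_le (hCpos t) with h0 | h0
    · rw [← h0, hk0]
      simp
      linarith
    · calc k (C t) - r = ((k (C t) - r) / C t) * C t := by
            field_simp
      _ ≤ M * C t := mul_le_mul_of_nonneg_right (hmax (C t) h0) (hCpos t)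
  obtain ⟨T, hT, hTeq⟩ := hachieve
  have hI : ∫ t in Set.Ioc 0 T, (k (C t) - r) = Real.log 10 * LRtarget := by
    rw [← hTeq]; field_simp
  have hCintT : IntegrableOn C (Set.Ioc 0 T) := hCint.mono_set Set.Ioc_subset_Ioi_self
  have hMC : IntegrableOn (fun t => M * C t) (Set.Ioc 0 T) := hCintT.const_mul M
  have hkC : IntegrableOn (fun t => k (C t) - r) (Set.Ioc 0 T) := hkCint T hT
  have h1 : ∫ t in Set.Ioc 0 T, (k (C t) - r) ≤ M * ∫ t in Set.Ioc 0 T, C t := by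
    rw [← integral_const_mul]
    exact setIntegral_mono_on hkC hMC measurableSet_Ioc (fun t _ => hptwise t)
  have h2 : ∫ t in Set.Ioc 0 T, C t ≤ ∫ t in Set.Ioi 0, C t :=
    setIntegral_mono_set hCint (ae_of_all _ hCpos)
      (HasSubset.Subset.eventuallyLE Set.Ioc_subset_Ioi_self)
  have h3 : M * ∫ t in Set.Ioi 0, C t = Real.log 10 * LRtarget := by
    rw [hAUC, hM]
    field_simp
  have heq1 : ∫ t in Set.Ioc 0 T, (k (C t) - r) = M * ∫ t in Set.Ioc 0 T, C t := by
    have h2' := mul_le_mul_of_nonneg_left h2 hMpos.le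
    linarith
  have heqC : ∫ t in Set.Ioc 0 T, C t = ∫ t in Set.Ioi 0, C t := by
    have h2' := mul_le_mul_of_nonneg_left h2 hMpos.le
    have : M * ∫ t in Set.Ioc 0 T, C t = M * ∫ t in Set.Ioi 0, C t := by linarith
    exact mul_left_cancel₀ hMpos.ne' this
  -- a.e. equality on Ioc 0 T
  have hzero : ∫ t in Set.Ioc 0 T, (M * C t - (k (C t) - r)) = 0 := by
    rw [integral_sub hMC hkC, integral_const_mul]
    linarith
  have haeT : ∀ᵐ t ∂(volume.restrict (Set.Ioc 0 T)), C t = copt := by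
    have hnn : 0 ≤ᵐ[volume.restrict (Set.Ioc 0 T)] fun t => M * C t - (k (C t) - r) :=
      ae_of_all _ (fun t => sub_nonneg.2 (hptwise t))
    have hint : Integrable (fun t => M * C t - (k (C t) - r))
        (volume.restrict (Set.Ioc 0 T)) := hMC.sub hkC
    have hae := (integral_eq_zero_iff_of_nonneg_ae hnn hint).mp hzero
    filter_upwards [hae] with t ht
    simp only [Pi.zero_apply] at ht
    have heqt : k (C t) - r = M * C t := by linarith [sub_eq_zero.mp ht]
    rcases eq_or_lt_of_le (hCpos t) with h0 | h0
    · exfalso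
      rw [← h0, hk0] at heqt
      simp at heqt
      linarith
    · have hdiv : (k (C t) - r) / C t = M := by
        rw [heqt]; field_simp
      exact unique_max_aux k k' k'' r copt hd1 hd2 hA3 hcopt hmax (C t) h0 hdiv
  -- zero after T
  have hsplit : ∫ t in Set.Ioi 0, C t
      = (∫ t in Set.Ioc 0 T, C t) + ∫ t in Set.Ioi T, C t := by
    rw [← setIntegral_union (Set.Ioc_disjoint_Ioi le_rfl) measurableSet_Ioi hCintT
      (hCint.mono_set (Set.Ioi_subset_Ioi hT.le)), Set.Ioc_union_Ioi_eq_Ioi hT.le]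
  have hIoiT : ∫ t in Set.Ioi T, C t = 0 := by linarith
  have haeIoi : ∀ᵐ t ∂(volume.restrict (Set.Ioi T)), C t = 0 := by
    have hae := (integral_eq_zero_iff_of_nonneg_ae (ae_of_all _ hCpos)
      (hCint.mono_set (Set.Ioi_subset_Ioi hT.le))).mp hIoiT
    filter_upwards [hae] with t ht
    simpa using ht
  -- T = Topt
  have hTT : T = Topt := by
    have hcongr : ∫ t in Set.Ioc 0 T, (k (C t) - r) = ∫ t in Set.Ioc 0 T, (k copt - r) := by
      apply integral_congr_ae
      filter_upwards [haeT] with t ht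
      rw [ht]
    rw [hcongr] at hI
    rw [setIntegral_const, Real.volume_real_Ioc_of_le (by linarith)] at hI
    rw [hTopt]
    rw [eq_div_iff (ne_of_gt hkcr)]
    simp at hI
    linarith [hI]
  rw [← hTT]
  exact ⟨(ae_restrict_iff' measurableSet_Ioc).mp haeT,
    (ae_restrict_iff' measurableSet_Ioi).mp haeIoi⟩
end

section
/- Under (A1)-(A3) and k_max>r, let T_min<T̂<T_opt, and let ĉ solve T̂·(k(ĉ)−r)=ln(10)·LR_target (a unique solution exists). Then ĉ>c_opt, and moreover r̂:=k(ĉ)−ĉ·k'(ĉ) satisfies r̂>r. -/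
/-- From the proof of Theorem 2(iii): under (A1)-(A3) and `k_max > r > 0`, for
`T_min < T̂ < T_opt` the equation `T̂·(k(ĉ)−r) = ln(10)·LR_target` has a unique
positive solution `ĉ`, and this solution satisfies `ĉ > c_opt` and
`r̂ := k(ĉ) − ĉ·k'(ĉ) > r`. -/
theorem stmt_9 (k k' k'' : ℝ → ℝ) (kmax r copt LRtarget That : ℝ)
    (hk0 : k 0 = 0)
    (hcont : ContinuousOn k (Set.Ici 0))
    (hmono : StrictMonoOn k (Set.Ici 0))
    (hd1 : ∀ c > (0:ℝ), HasDerivAt k (k' c) c)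
    (hd2 : ∀ c > (0:ℝ), HasDerivAt k' (k'' c) c)
    (hlim : Filter.Tendsto k Filter.atTop (nhds kmax))
    (hA3 : (∀ c > (0:ℝ), k'' c < 0) ∨
      (∃ cinfl > (0:ℝ), (∀ c : ℝ, 0 < c → c < cinfl → 0 < k'' c) ∧
        (∀ c : ℝ, cinfl < c → k'' c < 0)))
    (hr : 0 < r) (hkr : r < kmax)
    (hLR : 0 < LRtarget)
    (hcopt : 0 < copt)
    (hcrit : k' copt = (k copt - r) / copt)
    (hmax : ∀ x : ℝ, 0 < x → (k x - r) / x ≤ (k copt - r) / copt)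
    (hT1 : Real.log 10 * LRtarget / (kmax - r) < That)
    (hT2 : That < Real.log 10 * LRtarget / (k copt - r)) :
    (∃! c : ℝ, 0 < c ∧ That * (k c - r) = Real.log 10 * LRtarget) ∧
    ∀ c : ℝ, 0 < c → That * (k c - r) = Real.log 10 * LRtarget →
      copt < c ∧ r < k c - c * k' c := by
  have hlog : (0:ℝ) < Real.log 10 := Real.log_pos (by norm_num)
  have hL : 0 < Real.log 10 * LRtarget := mul_pos hlog hLR
  set L := Real.log 10 * LRtarget with hLdef
  have hkmr : 0 < kmax - r := sub_pos.mpr hkr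
  have hTpos : 0 < That := lt_trans (div_pos hL hkmr) hT1
  have hkcr : 0 < k copt - r := by
    by_contra h
    push_neg at h
    have : L / (k copt - r) ≤ 0 := div_nonpos_of_nonneg_of_nonpos hL.le h
    linarith
  set v := r + L / That with hvdef
  have hv1 : v < kmax := by
    have h1 : L < That * (kmax - r) := (div_lt_iff₀ hkmr).mp hT1
    have h2 : L / That < kmax - r := by
      rw [div_lt_iff₀ hTpos]; nlinarith
    rw [hvdef]; linarith
  have hv2 : k copt < v := by
    have h1 : That * (k copt - r) < L := (lt_div_iff₀ hkcr).mp hT2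
    have h2 : k copt - r < L / That := by
      rw [lt_div_iff₀ hTpos]; nlinarith
    rw [hvdef]; linarith
  -- equation ↔ k c = v
  have heqv : ∀ c : ℝ, That * (k c - r) = L ↔ k c = v := by
    intro c
    constructor
    · intro h
      have : k c - r = L / That := by
        field_simp
        linarith [h]
      rw [hvdef]; linarith
    · intro h
      rw [h, hvdef]
      field_simp
      ring
  -- existence of a solution
  obtain ⟨X, hXv, hXc⟩ :=
    ((hlim.eventually (eventually_gt_nhds hv1)).and (Filter.eventually_ge_atTop copt)).exists
  have hIcc_sub : Set.Icc copt X ⊆ Set.Ici (0:ℝ) := fun x hx => le_trans hcopt.le hx.1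
  have hivt := intermediate_value_Icc hXc (hcont.mono hIcc_sub)
  obtain ⟨c₀, hc₀mem, hkc₀⟩ := hivt ⟨hv2.le, hXv.le⟩
  have hc₀gt : copt < c₀ := by
    rcases lt_or_eq_of_le hc₀mem.1 with h | h
    · exact h
    · exfalso; rw [← h] at hkc₀; linarith
  have hc₀pos : 0 < c₀ := lt_trans hcopt hc₀gt
  -- any solution is > copt
  have hgtcopt : ∀ c : ℝ, 0 < c → k c = v → copt < c := by
    intro c hc hk
    by_contra h
    push_neg at h
    have := hmono.monotoneOn (Set.mem_Ici.mpr hc.le) (Set.mem_Ici.mpr hcopt.le) h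
    linarith
  -- key derivative lemma: F c < 0 for c > copt when k'' < 0 on (copt, c)
  have hFcopt : copt * k' copt - (k copt - r) = 0 := by
    rw [hcrit]; field_simp
    ring
  have hFd : ∀ x > (0:ℝ), HasDerivAt (fun y => y * k' y - (k y - r)) (x * k'' x) x := by
    intro x hx
    have h1 : HasDerivAt (fun y => y * k' y) (1 * k' x + x * k'' x) x :=
      (hasDerivAt_id x).mul (hd2 x hx)
    have h2 := h1.sub ((hd1 x hx).sub_const r)
    exact h2.congr_deriv (by ring)
  have hFneg : ∀ c : ℝ, copt < c → (∀ x ∈ Set.Ioo copt c, k'' x < 0) →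
      c * k' c - (k c - r) < 0 := by
    intro c hc hkk
    have hanti : StrictAntiOn (fun y => y * k' y - (k y - r)) (Set.Icc copt c) := by
      apply strictAntiOn_of_deriv_neg (convex_Icc _ _)
      · intro x hx
        exact (hFd x (lt_of_lt_of_le hcopt hx.1)).continuousAt.continuousWithinAt
      · intro x hx
        rw [interior_Icc] at hx
        have hx0 : 0 < x := lt_trans hcopt hx.1
        rw [(hFd x hx0).deriv]
        exact mul_neg_of_pos_of_neg hx0 (hkk x hx)
    have := hanti (Set.left_mem_Icc.mpr hc.le) (Set.right_mem_Icc.mpr hc.le) hc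
    simpa [hFcopt] using this
  -- in the sigmoid case, cinfl ≤ copt
  have hF : ∀ c : ℝ, copt < c → c * k' c - (k c - r) < 0 := by
    intro c hc
    rcases hA3 with hconc | ⟨cinfl, hcinfl, hppos, hpneg⟩
    · exact hFneg c hc (fun x hx => hconc x (lt_trans hcopt hx.1))
    · have hci : cinfl ≤ copt := by
        by_contra h
        push_neg at h
        -- F strictly increasing on [copt, cinfl], so F > 0 there, so g increasing: contradiction
        have hmonoF : StrictMonoOn (fun y => y * k' y - (k y - r)) (Set.Icc copt cinfl) := by
          apply strictMonoOn_of_deriv_pos (convex_Icc _ _)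
          · intro x hx
            exact (hFd x (lt_of_lt_of_le hcopt hx.1)).continuousAt.continuousWithinAt
          · intro x hx
            rw [interior_Icc] at hx
            have hx0 : 0 < x := lt_trans hcopt hx.1
            rw [(hFd x hx0).deriv]
            exact mul_pos hx0 (hppos x hx0 hx.2)
        have hFpos : ∀ x ∈ Set.Ioo copt cinfl, 0 < x * k' x - (k x - r) := by
          intro x hx
          have := hmonoF (Set.left_mem_Icc.mpr h.le) ⟨hx.1.le, hx.2.le⟩ hx.1
          simpa [hFcopt] using this
        have hgd : ∀ x > (0:ℝ),
            HasDerivAt (fun y => (k y - r) / y) ((k' x * x - (k x - r) * 1) / x ^ 2) x := by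
          intro x hx
          exact ((hd1 x hx).sub_const r).div (hasDerivAt_id x) (ne_of_gt hx)
        have hmonog : StrictMonoOn (fun y => (k y - r) / y) (Set.Icc copt cinfl) := by
          apply strictMonoOn_of_deriv_pos (convex_Icc _ _)
          · intro x hx
            exact (hgd x (lt_of_lt_of_le hcopt hx.1)).continuousAt.continuousWithinAt
          · intro x hx
            rw [interior_Icc] at hx
            have hx0 : 0 < x := lt_trans hcopt hx.1
            rw [(hgd x hx0).deriv]
            apply div_pos _ (pow_pos hx0 2)
            have := hFpos x hx
            nlinarith
        set m := (copt + cinfl) / 2 with hm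
        have hm1 : copt < m := by rw [hm]; linarith
        have hm2 : m < cinfl := by rw [hm]; linarith
        have := hmonog (Set.left_mem_Icc.mpr h.le) ⟨hm1.le, hm2.le⟩ hm1
        have hcontra := hmax m (lt_trans hcopt hm1)
        simp only at this
        linarith
      exact hFneg c hc (fun x hx => hpneg x (lt_of_le_of_lt hci hx.1))
  constructor
  · refine ⟨c₀, ⟨hc₀pos, (heqv c₀).mpr hkc₀⟩, ?_⟩
    intro y ⟨hy0, hyeq⟩
    have hky : k y = v := (heqv y).mp hyeq
    exact hmono.injOn (Set.mem_Ici.mpr hy0.le) (Set.mem_Ici.mpr hc₀pos.le) (by rw [hky, hkc₀])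
  · intro c hc heq
    have hkc : k c = v := (heqv c).mp heq
    have hcgt := hgtcopt c hc hkc
    refine ⟨hcgt, ?_⟩
    have := hF c hcgt
    linarith
end

section
/- Under (A1)-(A3) and k_max>r, for T_min<T̂<T_opt, any concentration profile C with LR(T)=LR_target for some T≤T̂ satisfies ∫₀^∞ C(t)dt ≥ T̂·ĉ, where ĉ is the unique solution of T̂·(k(ĉ)−r)=ln(10)·LR_target; equality holds iff C(t)=ĉ a.e. on [0,T̂] and C(t)=0 a.e. on (T̂,∞). -/
open MeasureTheory

set_option maxHeartbeats 1000000

/-- Theorem 2(iii) (time-restricted optimality): under (A1)-(A3) and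
`k_max > r > 0`, for `T_min < T̂ < T_opt`, any nonnegative integrable
concentration profile achieving log-reduction `LR_target` by some time
`T ≤ T̂` has `AUC ≥ T̂·ĉ`, where `ĉ` is the unique solution of
`T̂·(k(ĉ)−r) = ln(10)·LR_target`; equality holds iff the profile equals `ĉ`
a.e. on `(0, T̂]` and `0` a.e. on `(T̂, ∞)`. -/
theorem stmt_10 (k k' k'' : ℝ → ℝ) (kmax r copt LRtarget That chat : ℝ)
    (hk0 : k 0 = 0)
    (hcont : ContinuousOn k (Set.Ici 0))
    (hmono : StrictMonoOn k (Set.Ici 0))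
    (hd1 : ∀ c > (0:ℝ), HasDerivAt k (k' c) c)
    (hd2 : ∀ c > (0:ℝ), HasDerivAt k' (k'' c) c)
    (hlim : Filter.Tendsto k Filter.atTop (nhds kmax))
    (hA3 : (∀ c > (0:ℝ), k'' c < 0) ∨
      (∃ cinfl > (0:ℝ), (∀ c : ℝ, 0 < c → c < cinfl → 0 < k'' c) ∧
        (∀ c : ℝ, cinfl < c → k'' c < 0)))
    (hr : 0 < r) (hkr : r < kmax)
    (hLR : 0 < LRtarget)
    (hcopt : 0 < copt)
    (hcrit : k' copt = (k copt - r) / copt)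
    (hmax : ∀ x : ℝ, 0 < x → (k x - r) / x ≤ (k copt - r) / copt)
    (hT1 : Real.log 10 * LRtarget / (kmax - r) < That)
    (hT2 : That < Real.log 10 * LRtarget / (k copt - r))
    (hchatpos : 0 < chat)
    (hchat : That * (k chat - r) = Real.log 10 * LRtarget) :
    ∀ C : ℝ → ℝ, (∀ t, 0 ≤ C t) → IntegrableOn C (Set.Ioi 0) →
      (∀ T > (0:ℝ), IntegrableOn (fun t => k (C t) - r) (Set.Ioc 0 T)) →
      (∃ T : ℝ, 0 < T ∧ T ≤ That ∧
        (1 / Real.log 10) * ∫ t in Set.Ioc 0 T, (k (C t) - r) = LRtarget) →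
      That * chat ≤ ∫ t in Set.Ioi 0, C t ∧
      ((∫ t in Set.Ioi 0, C t) = That * chat ↔
        ((∀ᵐ t : ℝ, t ∈ Set.Ioc 0 That → C t = chat) ∧
         (∀ᵐ t : ℝ, t ∈ Set.Ioi That → C t = 0))) := by
  have hL10 : (0:ℝ) < Real.log 10 := Real.log_pos (by norm_num)
  have hkmr : (0:ℝ) < kmax - r := sub_pos.mpr hkr
  have hThat : 0 < That := lt_trans (div_pos (mul_pos hL10 hLR) hkmr) hT1
  have hgchat : 0 < k chat - r := by
    have h1 : 0 < That * (k chat - r) := hchat ▸ mul_pos hL10 hLR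
    nlinarith [h1, hThat]
  -- k copt > r
  have hkcoptr : 0 < k copt - r := by
    obtain ⟨x, hxr, hx1⟩ : ∃ x : ℝ, k x ∈ Set.Ioi r ∧ (1:ℝ) ≤ x :=
      ((hlim.eventually (Ioi_mem_nhds hkr)).and (Filter.eventually_ge_atTop 1)).exists
    have hx0 : (0:ℝ) < x := lt_of_lt_of_le one_pos hx1
    have h2 : 0 < (k x - r) / x := div_pos (sub_pos.mpr hxr) hx0
    have h3 : 0 < (k copt - r) / copt := lt_of_lt_of_le h2 (hmax x hx0)
    have h4 := mul_pos h3 hcopt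
    rwa [div_mul_cancel₀ _ (ne_of_gt hcopt)] at h4
  -- chat > copt
  have hcc : copt < chat := by
    have h1 : That * (k copt - r) < Real.log 10 * LRtarget := (lt_div_iff₀ hkcoptr).mp hT2
    have h2 : k copt < k chat := by nlinarith [hchat, hThat]
    by_contra hcon
    push_neg at hcon
    rcases eq_or_lt_of_le hcon with he | hl
    · rw [he] at h2; exact lt_irrefl _ h2
    · have := hmono (Set.mem_Ici.mpr hchatpos.le) (Set.mem_Ici.mpr hcopt.le) hl
      linarith
  -- derivative nonnegativity from monotonicity
  have hk'nonneg : ∀ c : ℝ, 0 < c → 0 ≤ k' c := by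
    intro c hc
    have hder := hasDerivAt_iff_tendsto_slope.mp (hd1 c hc)
    have hten : Filter.Tendsto (slope k c) (nhdsWithin c (Set.Ioi c)) (nhds (k' c)) :=
      hder.mono_left (nhdsWithin_mono c (fun x hx => ne_of_gt hx))
    refine ge_of_tendsto hten ?_
    filter_upwards [self_mem_nhdsWithin] with x hx
    rw [slope_def_field]
    have hlt : k c < k x :=
      hmono (Set.mem_Ici.mpr hc.le) (Set.mem_Ici.mpr (lt_trans hc hx).le) hx
    have hxc : (0:ℝ) < x - c := sub_pos.mpr hx
    exact div_nonneg (sub_nonneg.mpr hlt.le) hxc.le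
  -- auxiliary function ψ
  set ψ : ℝ → ℝ := fun x => x * k' x - k x + r with hψdef
  have hψd : ∀ x : ℝ, 0 < x → HasDerivAt ψ (x * k'' x) x := by
    intro x hx
    have h1 := (((hasDerivAt_id x).mul (hd2 x hx)).sub (hd1 x hx)).add_const r
    simp only [id_eq] at h1
    have h2 : 1 * k' x + x * k'' x - k' x = x * k'' x := by ring
    rw [h2] at h1
    exact h1
  have hψcopt : ψ copt = 0 := by
    simp only [hψdef]
    rw [hcrit]
    field_simp
    ring
  -- extraction of unified inflection data
  obtain ⟨m, hm0, hmcopt, hneg, hconv⟩ :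
      ∃ m : ℝ, 0 ≤ m ∧ m ≤ copt ∧ (∀ x : ℝ, m < x → k'' x < 0) ∧
        (∀ x : ℝ, 0 < x → x < m → 0 < k'' x) := by
    rcases hA3 with h | ⟨ci, hci, hcv, hcc'⟩
    · exact ⟨0, le_refl _, hcopt.le, fun x hx => h x hx,
        fun x hx hx' => absurd hx' (not_lt.mpr hx.le)⟩
    · refine ⟨ci, hci.le, ?_, hcc', hcv⟩
      by_contra hlt
      push_neg at hlt
      -- copt < ci leads to contradiction with hmax
      have hcontψ : ContinuousOn ψ (Set.Icc copt ci) := by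
        intro x hx
        exact ((hψd x (lt_of_lt_of_le hcopt hx.1)).continuousAt).continuousWithinAt
      have hmonoψ : StrictMonoOn ψ (Set.Icc copt ci) := by
        apply strictMonoOn_of_deriv_pos (convex_Icc _ _) hcontψ
        intro x hx
        rw [interior_Icc] at hx
        rw [(hψd x (lt_trans hcopt hx.1)).deriv]
        exact mul_pos (lt_trans hcopt hx.1) (hcv x (lt_trans hcopt hx.1) hx.2)
      have hφd : ∀ x : ℝ, 0 < x → HasDerivAt (fun y => (k y - r) / y) (ψ x / x ^ 2) x := by
        intro x hx
        have h1 := ((hd1 x hx).sub_const r).div (hasDerivAt_id x) (ne_of_gt hx)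
        simp only [id_eq] at h1
        have h2 : (k' x * x - (k x - r) * 1) / x ^ 2 = ψ x / x ^ 2 := by
          simp only [hψdef]; ring
        rw [h2] at h1
        exact h1
      have hcontφ : ContinuousOn (fun y => (k y - r) / y) (Set.Icc copt ci) := by
        intro x hx
        exact ((hφd x (lt_of_lt_of_le hcopt hx.1)).continuousAt).continuousWithinAt
      have hφmono : StrictMonoOn (fun y => (k y - r) / y) (Set.Icc copt ci) := by
        apply strictMonoOn_of_deriv_pos (convex_Icc _ _) hcontφ
        intro x hx
        rw [interior_Icc] at hx
        rw [(hφd x (lt_trans hcopt hx.1)).deriv]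
        have hψpos : 0 < ψ x := by
          have := hmonoψ (Set.mem_Icc.mpr ⟨le_refl _, hlt.le⟩)
            (Set.mem_Icc.mpr ⟨hx.1.le, hx.2.le⟩) hx.1
          rw [hψcopt] at this
          exact this
        exact div_pos hψpos (pow_pos (lt_trans hcopt hx.1) 2)
      have := hφmono (Set.mem_Icc.mpr ⟨le_refl _, hlt.le⟩)
        (Set.mem_Icc.mpr ⟨hlt.le, le_refl _⟩) hlt
      exact absurd (hmax ci hci) (not_le.mpr this)
  have hmchat : m < chat := lt_of_le_of_lt hmcopt hcc
  -- ψ strictly decreasing past copt, giving b > 0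
  have hψanti : StrictAntiOn ψ (Set.Ici copt) := by
    apply strictAntiOn_of_deriv_neg (convex_Ici _)
    · intro x hx
      exact ((hψd x (lt_of_lt_of_le hcopt hx)).continuousAt).continuousWithinAt
    · intro x hx
      rw [interior_Ici] at hx
      rw [(hψd x (lt_trans hcopt hx)).deriv]
      exact mul_neg_of_pos_of_neg (lt_trans hcopt hx) (hneg x (lt_of_le_of_lt hmcopt hx))
  have hb : 0 < k chat - r - chat * k' chat := by
    have h1 := hψanti (Set.mem_Ici.mpr (le_refl copt)) (Set.mem_Ici.mpr hcc.le) hcc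
    rw [hψcopt] at h1
    simp only [hψdef] at h1
    linarith
  -- k' strictly decreasing past m
  have hk'anti : StrictAntiOn k' (Set.Ioi m) := by
    apply strictAntiOn_of_deriv_neg (convex_Ioi _)
    · intro x hx
      exact ((hd2 x (lt_of_le_of_lt hm0 hx)).continuousAt).continuousWithinAt
    · intro x hx
      rw [interior_Ioi] at hx
      rw [(hd2 x (lt_of_le_of_lt hm0 hx)).deriv]
      exact hneg x hx
  have hlam : 0 < k' chat := by
    rcases lt_or_eq_of_le (hk'nonneg chat hchatpos) with h | h
    · exact h
    · exfalso
      have h1 := hk'anti (Set.mem_Ioi.mpr hmchat)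
        (Set.mem_Ioi.mpr (lt_trans hmchat (lt_add_one chat))) (lt_add_one chat)
      have h2 := hk'nonneg (chat + 1) (by linarith)
      linarith
  -- the supporting line
  set b : ℝ := k chat - r - chat * k' chat with hbdef
  have hchateq : k chat - r = k' chat * chat + b := by rw [hbdef]; ring
  -- key strict inequality
  have hL : ∀ c : ℝ, 0 ≤ c → c ≠ chat → k c - r < k' chat * c + b := by
    intro c hc hne
    set h : ℝ → ℝ := fun y => k' chat * y + b - (k y - r) with hhdef
    have hh0 : h chat = 0 := by simp only [hhdef, hbdef]; ring
    have hhd : ∀ y : ℝ, 0 < y → HasDerivAt h (k' chat - k' y) y := by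
      intro y hy
      have h1 := (((hasDerivAt_id y).const_mul (k' chat)).add_const b).sub
        ((hd1 y hy).sub_const r)
      have h2 : k' chat * 1 - k' y = k' chat - k' y := by ring
      rw [h2] at h1
      exact h1
    have hhcont : ContinuousOn h (Set.Ici 0) := by
      apply ContinuousOn.sub
      · exact (continuousOn_const.mul continuousOn_id).add continuousOn_const
      · exact hcont.sub continuousOn_const
    have hApos : ∀ x : ℝ, m ≤ x → x < chat → 0 < h x := by
      intro x hx1 hx2
      have hanti : StrictAntiOn h (Set.Icc m chat) := by
        apply strictAntiOn_of_deriv_neg (convex_Icc _ _)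
          (hhcont.mono (fun y hy => le_trans hm0 hy.1))
        intro y hy
        rw [interior_Icc] at hy
        rw [(hhd y (lt_of_le_of_lt hm0 hy.1)).deriv]
        have := hk'anti (Set.mem_Ioi.mpr hy.1) (Set.mem_Ioi.mpr hmchat) hy.2
        linarith
      have := hanti (Set.mem_Icc.mpr ⟨hx1, hx2.le⟩)
        (Set.mem_Icc.mpr ⟨hmchat.le, le_refl _⟩) hx2
      linarith [hh0]
    have hBpos : ∀ x : ℝ, chat < x → 0 < h x := by
      intro x hx
      have hmono2 : StrictMonoOn h (Set.Ici chat) := by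
        apply strictMonoOn_of_deriv_pos (convex_Ici _)
          (hhcont.mono (fun y hy => le_trans hchatpos.le hy))
        intro y hy
        rw [interior_Ici] at hy
        rw [(hhd y (lt_trans hchatpos hy)).deriv]
        have := hk'anti (Set.mem_Ioi.mpr hmchat) (Set.mem_Ioi.mpr (lt_trans hmchat hy)) hy
        linarith
      have := hmono2 (Set.mem_Ici.mpr (le_refl chat)) (Set.mem_Ici.mpr hx.le) hx
      linarith [hh0]
    have hgoal : 0 < h c := by
      rcases lt_trichotomy c chat with hlt | heq | hgt
      · rcases le_or_gt m c with hmc | hcm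
        · exact hApos c hmc hlt
        · -- 0 ≤ c < m: mean value argument using convexity on (0, m)
          have hh0pos : 0 < h 0 := by
            simp only [hhdef]
            rw [hk0]
            simp only [mul_zero, zero_add, zero_sub, sub_neg_eq_add]
            linarith [hb]
          have hhmpos : 0 < h m := hApos m (le_refl m) hmchat
          rcases eq_or_lt_of_le hc with hc0 | hc0
          · rw [← hc0]; exact hh0pos
          by_contra hcon
          push_neg at hcon
          obtain ⟨ξ₁, hξ₁, he₁⟩ := exists_hasDerivAt_eq_slope h (fun y => k' chat - k' y)
            hc0 (hhcont.mono (fun y hy => hy.1)) (fun y hy => hhd y hy.1)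
          obtain ⟨ξ₂, hξ₂, he₂⟩ := exists_hasDerivAt_eq_slope h (fun y => k' chat - k' y)
            hcm (hhcont.mono (fun y hy => le_trans hc0.le hy.1))
            (fun y hy => hhd y (lt_trans hc0 hy.1))
          have hs1 : k' chat - k' ξ₁ < 0 := by
            rw [he₁]
            apply div_neg_of_neg_of_pos
            · linarith [hh0pos]
            · linarith
          have hs2 : 0 < k' chat - k' ξ₂ := by
            rw [he₂]
            apply div_pos
            · linarith [hhmpos]
            · linarith
          have hk'mono : StrictMonoOn k' (Set.Ioo 0 m) := by
            apply strictMonoOn_of_deriv_pos (convex_Ioo _ _)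
            · intro y hy
              exact ((hd2 y hy.1).continuousAt).continuousWithinAt
            · intro y hy
              rw [interior_Ioo] at hy
              rw [(hd2 y hy.1).deriv]
              exact hconv y hy.1 hy.2
          have hlt12 : ξ₁ < ξ₂ := lt_trans hξ₁.2 hξ₂.1
          have := hk'mono (Set.mem_Ioo.mpr ⟨hξ₁.1, lt_trans hξ₁.2 hcm⟩)
            (Set.mem_Ioo.mpr ⟨lt_trans hξ₁.1 hlt12, hξ₂.2⟩) hlt12
          linarith
      · exact absurd heq hne
      · exact hBpos c hgt
    simp only [hhdef] at hgoal
    linarith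
  have hLe : ∀ c : ℝ, 0 ≤ c → k c - r ≤ k' chat * c + b := by
    intro c hc
    by_cases hne : c = chat
    · rw [hne, ← hchateq]
    · exact (hL c hc hne).le
  -- Main argument
  intro C hC0 hCint hkint hex
  obtain ⟨T, hT0, hTle, hLReq⟩ := hex
  have hIeq : (∫ t in Set.Ioc 0 T, (k (C t) - r)) = That * (k chat - r) := by
    rw [hchat]
    have hne : Real.log 10 ≠ 0 := ne_of_gt hL10
    field_simp at hLReq
    linarith
  have hCT : IntegrableOn C (Set.Ioc 0 T) := hCint.mono_set Set.Ioc_subset_Ioi_self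
  have hkT : IntegrableOn (fun t => k (C t) - r) (Set.Ioc 0 T) := hkint T hT0
  have hvol : volume (Set.Ioc (0:ℝ) T) = ENNReal.ofReal T := by
    rw [Real.volume_Ioc, sub_zero]
  have hconst : IntegrableOn (fun _ : ℝ => b) (Set.Ioc 0 T) :=
    (integrableOn_const_iff).mpr (Or.inr (by rw [hvol]; exact ENNReal.ofReal_lt_top))
  have hlin : IntegrableOn (fun t => k' chat * C t + b) (Set.Ioc 0 T) :=
    (hCT.const_mul _).add hconst
  have hmono_int : (∫ t in Set.Ioc 0 T, (k (C t) - r)) ≤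
      ∫ t in Set.Ioc 0 T, (k' chat * C t + b) :=
    integral_mono hkT hlin (fun t => hLe (C t) (hC0 t))
  have hsum : (∫ t in Set.Ioc 0 T, (k' chat * C t + b)) =
      k' chat * (∫ t in Set.Ioc 0 T, C t) + b * T := by
    rw [integral_add (hCT.const_mul _) hconst, integral_const_mul, setIntegral_const,
      measureReal_def, hvol, ENNReal.toReal_ofReal hT0.le, smul_eq_mul, mul_comm T b]
  have hICT : k' chat * (That * chat) + b * (That - T) ≤
      k' chat * ∫ t in Set.Ioc 0 T, C t := by
    have h1 := hmono_int
    rw [hIeq, hsum, hchateq] at h1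
    nlinarith [h1]
  have hsplit : (∫ t in Set.Ioi 0, C t) =
      (∫ t in Set.Ioc 0 T, C t) + ∫ t in Set.Ioi T, C t := by
    rw [← setIntegral_union (Set.Ioc_disjoint_Ioi (le_refl T)) measurableSet_Ioi hCT
      (hCint.mono_set (Set.Ioi_subset_Ioi hT0.le)), Set.Ioc_union_Ioi_eq_Ioi hT0.le]
  have htail : 0 ≤ ∫ t in Set.Ioi T, C t :=
    setIntegral_nonneg measurableSet_Ioi (fun x _ => hC0 x)
  have hbT : 0 ≤ b * (That - T) := mul_nonneg hb.le (by linarith)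
  have hIocge : That * chat ≤ ∫ t in Set.Ioc 0 T, C t := by
    nlinarith [hICT, hbT, hlam]
  have hmain : That * chat ≤ ∫ t in Set.Ioi 0, C t := by
    rw [hsplit]; linarith
  refine ⟨hmain, ?_, ?_⟩
  · -- forward direction
    intro heq
    have hIoc_eq : (∫ t in Set.Ioc 0 T, C t) = That * chat := by
      rw [hsplit] at heq; linarith
    have htail_eq : (∫ t in Set.Ioi T, C t) = 0 := by
      rw [hsplit] at heq; linarith
    have hTeq : T = That := by
      have h2 : b * (That - T) ≤ 0 := by nlinarith [hICT, hIoc_eq]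
      refine le_antisymm hTle ?_
      nlinarith [hb, h2]
    subst hTeq
    constructor
    · -- C = chat a.e. on Ioc 0 That
      have hfint : IntegrableOn (fun t => k' chat * C t + b - (k (C t) - r))
          (Set.Ioc 0 T) := hlin.sub hkT
      have hfnn : 0 ≤ᵐ[volume.restrict (Set.Ioc 0 T)]
          (fun t => k' chat * C t + b - (k (C t) - r)) :=
        Filter.Eventually.of_forall (fun t => by
          have := hLe (C t) (hC0 t); simp only [Pi.zero_apply]; linarith)
      have hf0 : (∫ t in Set.Ioc 0 T, (k' chat * C t + b - (k (C t) - r))) = 0 := by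
        rw [integral_sub hlin hkT, hsum, hIeq, hIoc_eq, hchateq]
        ring
      have h1 := (setIntegral_eq_zero_iff_of_nonneg_ae hfnn hfint).mp hf0
      have h2 := (ae_restrict_iff' measurableSet_Ioc).mp h1
      filter_upwards [h2] with t ht hts
      have h3 : k' chat * C t + b - (k (C t) - r) = 0 := by
        have := ht hts; simpa using this
      by_contra hne
      have := hL (C t) (hC0 t) hne
      linarith
    · -- C = 0 a.e. on Ioi That
      have h0 : 0 ≤ᵐ[volume.restrict (Set.Ioi T)] C :=
        Filter.Eventually.of_forall (fun t => hC0 t)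
      have hint : IntegrableOn C (Set.Ioi T) := hCint.mono_set (Set.Ioi_subset_Ioi hT0.le)
      have h1 := (setIntegral_eq_zero_iff_of_nonneg_ae h0 hint).mp htail_eq
      have h2 := (ae_restrict_iff' measurableSet_Ioi).mp h1
      filter_upwards [h2] with t ht hts
      have := ht hts
      simpa using this
  · -- backward direction
    rintro ⟨h1, h2⟩
    have e1 : (∫ t in Set.Ioc 0 That, C t) = That * chat := by
      rw [setIntegral_congr_ae measurableSet_Ioc
        (by filter_upwards [h1] with t ht hts; exact ht hts : ∀ᵐ t : ℝ,
          t ∈ Set.Ioc 0 That → C t = (fun _ => chat) t)]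
      rw [setIntegral_const, measureReal_def, Real.volume_Ioc, sub_zero,
        ENNReal.toReal_ofReal hThat.le, smul_eq_mul]
    have e2 : (∫ t in Set.Ioi That, C t) = 0 := by
      rw [setIntegral_congr_ae measurableSet_Ioi
        (by filter_upwards [h2] with t ht hts; exact ht hts : ∀ᵐ t : ℝ,
          t ∈ Set.Ioi That → C t = (fun _ => (0:ℝ)) t)]
      simp
    have hsplit2 : (∫ t in Set.Ioi 0, C t) =
        (∫ t in Set.Ioc 0 That, C t) + ∫ t in Set.Ioi That, C t := by
      rw [← setIntegral_union (Set.Ioc_disjoint_Ioi (le_refl That)) measurableSet_Ioi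
        (hCint.mono_set Set.Ioc_subset_Ioi_self)
        (hCint.mono_set (Set.Ioi_subset_Ioi hThat.le)), Set.Ioc_union_Ioi_eq_Ioi hThat.le]
    rw [hsplit2, e1, e2, add_zero]
end

section
/- For the Hill function k_H with γ>0 and α=k_max/r>1, the equation k'(c)=(k(c)−r)/c is equivalent to (α−1)(c/C50)^{2γ} − ((γ−1)α+2)(c/C50)^γ − 1 = 0, whose unique positive solution is c_opt = C50·(α−1)^{−1/γ}·[1 + α·((γ−1)/2 + √(((γ−1)/2)² + γ/α))]^{1/γ}. -/
private lemma quad_unique (α B u v : ℝ) (hα : 1 < α) (hu : 0 < u) (hv : 0 < v)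
    (h1 : (α-1)*u^2 - B*u - 1 = 0) (h2 : (α-1)*v^2 - B*v - 1 = 0) : u = v := by
  have h3 : (u - v) * ((α-1)*(u+v) - B) = 0 := by linear_combination h1 - h2
  rcases mul_eq_zero.mp h3 with h | h
  · linarith
  · exfalso
    have h4 : (α-1)*(u*v) = -1 := by linear_combination u*h - h1
    nlinarith [mul_pos hu hv]

private lemma two_gamma_pow (x γ : ℝ) (hx : 0 ≤ x) : x ^ (2*γ) = (x ^ γ) ^ (2:ℕ) := by
  rw [mul_comm, Real.rpow_mul hx]; norm_num

theorem key (kmax r γ C50 : ℝ)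
    (hγ : 0 < γ) (hC50 : 0 < C50) (hr : 0 < r) (hkr : r < kmax) :
    (∀ c : ℝ, 0 < c → (deriv (fun c => kmax * c ^ γ / (C50 ^ γ + c ^ γ)) c =
        ((fun c => kmax * c ^ γ / (C50 ^ γ + c ^ γ)) c - r) / c ↔
      (kmax / r - 1) * (c / C50) ^ (2 * γ) - ((γ - 1) * (kmax / r) + 2) * (c / C50) ^ γ - 1 = 0)) ∧
    ((0 < C50 * (kmax / r - 1) ^ (-(1:ℝ) / γ) *
      (1 + (kmax / r) * ((γ - 1) / 2 + Real.sqrt (((γ - 1) / 2) ^ 2 + γ / (kmax / r)))) ^ ((1:ℝ) / γ) ∧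
      (kmax / r - 1) * ((C50 * (kmax / r - 1) ^ (-(1:ℝ) / γ) *
      (1 + (kmax / r) * ((γ - 1) / 2 + Real.sqrt (((γ - 1) / 2) ^ 2 + γ / (kmax / r)))) ^ ((1:ℝ) / γ)) / C50) ^ (2 * γ)
      - ((γ - 1) * (kmax / r) + 2) * ((C50 * (kmax / r - 1) ^ (-(1:ℝ) / γ) *
      (1 + (kmax / r) * ((γ - 1) / 2 + Real.sqrt (((γ - 1) / 2) ^ 2 + γ / (kmax / r)))) ^ ((1:ℝ) / γ)) / C50) ^ γ - 1 = 0) ∧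
    ∀ c : ℝ, 0 < c →
      (kmax / r - 1) * (c / C50) ^ (2 * γ) - ((γ - 1) * (kmax / r) + 2) * (c / C50) ^ γ - 1 = 0 →
      c = C50 * (kmax / r - 1) ^ (-(1:ℝ) / γ) *
      (1 + (kmax / r) * ((γ - 1) / 2 + Real.sqrt (((γ - 1) / 2) ^ 2 + γ / (kmax / r)))) ^ ((1:ℝ) / γ)) := by
  set α := kmax / r with hαdef
  have hα : (1:ℝ) < α := (one_lt_div hr).2 hkr
  have hα0 : (0:ℝ) < α := by linarith
  have hα1 : (0:ℝ) < α - 1 := by linarith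
  set d := (γ - 1) / 2 with hddef
  set s := Real.sqrt (d ^ 2 + γ / α) with hsdef
  have harg : (0:ℝ) ≤ d ^ 2 + γ / α := by positivity
  have hs0 : 0 ≤ s := Real.sqrt_nonneg _
  have hs2 : s ^ 2 = d ^ 2 + γ / α := Real.sq_sqrt harg
  set M := 1 + α * (d + s) with hMdef
  have hM : 0 < M := by nlinarith [div_pos hγ hα0, sq_nonneg (s + d), sq_nonneg (s - d)]
  set copt := C50 * (α - 1) ^ (-(1:ℝ) / γ) * M ^ ((1:ℝ) / γ) with hcoptdef
  clear_value copt
  clear_value M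
  clear_value s
  clear_value d
  clear_value α
  have hA : 0 < (α - 1) ^ (-(1:ℝ) / γ) := Real.rpow_pos_of_pos hα1 _
  have hB : 0 < M ^ ((1:ℝ) / γ) := Real.rpow_pos_of_pos hM _
  have hcopt : 0 < copt := by
    rw [hcoptdef]; exact mul_pos (mul_pos hC50 hA) hB
  -- value of u at copt
  have huopt : (copt / C50) ^ γ = M / (α - 1) := by
    have h1 : copt / C50 = (α - 1) ^ (-(1:ℝ) / γ) * M ^ ((1:ℝ) / γ) := by
      rw [hcoptdef]; field_simp
    rw [h1, Real.mul_rpow hA.le hB.le, ← Real.rpow_mul hα1.le, ← Real.rpow_mul hM.le,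
      div_mul_cancel₀ _ hγ.ne', div_mul_cancel₀ _ hγ.ne', Real.rpow_neg_one, Real.rpow_one]
    exact inv_mul_eq_div _ _
  -- quadratic satisfied by M/(α-1)
  have hquad : (α - 1) * (M / (α - 1)) ^ 2 - ((γ - 1) * α + 2) * (M / (α - 1)) - 1 = 0 := by
    have hs2' : α * s ^ 2 = α * d ^ 2 + γ := by
      rw [hs2]; field_simp
    have hM2 : M ^ 2 - ((γ - 1) * α + 2) * M - (α - 1) = 0 := by
      rw [hMdef, hddef] at *; linear_combination α * hs2'
    field_simp
    linear_combination hM2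
  -- the derivative equivalence
  have part1 : ∀ c : ℝ, 0 < c → (deriv (fun c => kmax * c ^ γ / (C50 ^ γ + c ^ γ)) c =
        ((fun c => kmax * c ^ γ / (C50 ^ γ + c ^ γ)) c - r) / c ↔
      (α - 1) * (c / C50) ^ (2 * γ) - ((γ - 1) * α + 2) * (c / C50) ^ γ - 1 = 0) := by
    intro c hc
    have hc0 : c ≠ 0 := hc.ne'
    have hP : 0 < c ^ γ := Real.rpow_pos_of_pos hc γ
    have hQ : 0 < C50 ^ γ := Real.rpow_pos_of_pos hC50 γ
    have hS : 0 < C50 ^ γ + c ^ γ := by positivity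
    have hd : HasDerivAt (fun x : ℝ => kmax * x ^ γ / (C50 ^ γ + x ^ γ))
        ((kmax * (γ * c ^ (γ - 1)) * (C50 ^ γ + c ^ γ) -
          kmax * c ^ γ * (γ * c ^ (γ - 1))) / (C50 ^ γ + c ^ γ) ^ 2) c := by
      have h1 : HasDerivAt (fun x : ℝ => x ^ γ) (γ * c ^ (γ - 1)) c :=
        Real.hasDerivAt_rpow_const (Or.inl hc0)
      exact ((h1.const_mul kmax).div ((h1.const_add (C50 ^ γ))) hS.ne')
    rw [hd.deriv]
    have hsub : c ^ (γ - 1) = c ^ γ / c := Real.rpow_sub_one hc0 γ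
    have hdiv : (c / C50) ^ γ = c ^ γ / C50 ^ γ := Real.div_rpow hc.le hC50.le γ
    have h2γ : (c / C50) ^ (2 * γ) = (c ^ γ / C50 ^ γ) ^ (2:ℕ) := by
      rw [two_gamma_pow _ _ (by positivity), hdiv]
    rw [hsub, hdiv, h2γ]
    simp only []
    generalize c ^ γ = P at *
    generalize C50 ^ γ = Q at *
    rw [hαdef, div_eq_div_iff (by positivity) hc0]
    field_simp
    constructor
    · intro h
      have hE : ((kmax - r) * P ^ 2 - ((γ - 1) * kmax + 2 * r) * P * Q - r * Q ^ 2) * (Q + P) = 0 := by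
        linear_combination -(Q + P) * h
      have hE0 := (mul_eq_zero.mp hE).resolve_right hS.ne'
      linear_combination hE0
    · intro h
      have hE0 : (kmax - r) * P ^ 2 - ((γ - 1) * kmax + 2 * r) * P * Q - r * Q ^ 2 = 0 := by
        have hE : ((kmax - r) * P ^ 2 - ((γ - 1) * kmax + 2 * r) * P * Q - r * Q ^ 2) * (r * Q) = 0 := by
          linear_combination (r * Q) * h
        exact (mul_eq_zero.mp hE).resolve_right (by positivity)
      linear_combination -hE0
  refine ⟨part1, ⟨hcopt, ?_⟩, ?_⟩
  · rw [two_gamma_pow _ _ (by positivity), huopt]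
    calc (α - 1) * (M / (α - 1)) ^ (2:ℕ) - ((γ - 1) * α + 2) * (M / (α - 1)) - 1
        = (α - 1) * (M / (α - 1)) ^ 2 - ((γ - 1) * α + 2) * (M / (α - 1)) - 1 := by norm_num
      _ = 0 := hquad
  · intro c hc heqn
    have hu : 0 < (c / C50) ^ γ := Real.rpow_pos_of_pos (by positivity) γ
    rw [two_gamma_pow _ _ (by positivity)] at heqn
    have h1 : (α - 1) * ((c / C50) ^ γ) ^ 2 - ((γ - 1) * α + 2) * ((c / C50) ^ γ) - 1 = 0 := by
      calc (α - 1) * ((c / C50) ^ γ) ^ 2 - ((γ - 1) * α + 2) * ((c / C50) ^ γ) - 1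
          = (α - 1) * ((c / C50) ^ γ) ^ (2:ℕ) - ((γ - 1) * α + 2) * ((c / C50) ^ γ) - 1 := by norm_num
        _ = 0 := heqn
    have huv : (c / C50) ^ γ = (copt / C50) ^ γ := by
      rw [huopt]
      exact quad_unique α ((γ - 1) * α + 2) _ _ hα hu (by positivity) h1 hquad
    have h2 : c / C50 = copt / C50 := by
      have h3 : ((c / C50) ^ γ) ^ γ⁻¹ = ((copt / C50) ^ γ) ^ γ⁻¹ := by rw [huv]
      rwa [← Real.rpow_mul (by positivity : (0:ℝ) ≤ c / C50),
        ← Real.rpow_mul (by positivity : (0:ℝ) ≤ copt / C50),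
        mul_inv_cancel₀ hγ.ne', Real.rpow_one, Real.rpow_one] at h3
    field_simp at h2
    exact h2


/-- For the Hill function with `γ > 0` and `α = k_max/r > 1`, the critical point
equation `k'(c) = (k(c)−r)/c` is, for `c > 0`, equivalent to
`(α−1)(c/C50)^{2γ} − ((γ−1)α+2)(c/C50)^γ − 1 = 0`, whose unique positive
solution is
`c_opt = C50·(α−1)^{−1/γ}·[1 + α((γ−1)/2 + √(((γ−1)/2)² + γ/α))]^{1/γ}`. -/
theorem stmt_12 (kmax r γ C50 : ℝ)
    (hγ : 0 < γ) (hC50 : 0 < C50) (hr : 0 < r) (hkr : r < kmax) :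
    let α := kmax / r
    let kH : ℝ → ℝ := fun c => kmax * c ^ γ / (C50 ^ γ + c ^ γ)
    let eqn : ℝ → Prop := fun c =>
      (α - 1) * (c / C50) ^ (2 * γ) - ((γ - 1) * α + 2) * (c / C50) ^ γ - 1 = 0
    let copt := C50 * (α - 1) ^ (-(1:ℝ) / γ) *
      (1 + α * ((γ - 1) / 2 + Real.sqrt (((γ - 1) / 2) ^ 2 + γ / α))) ^ ((1:ℝ) / γ)
    (∀ c : ℝ, 0 < c → (deriv kH c = (kH c - r) / c ↔ eqn c)) ∧
    (0 < copt ∧ eqn copt) ∧ ∀ c : ℝ, 0 < c → eqn c → c = copt := by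
  exact key kmax r γ C50 hγ hC50 hr hkr
end

section
/- For the Emax model (Hill function with γ=1), k(c)=k_max·c/(C50+c), with α=k_max/r>1, the maximizer of (k(c)−r)/c over c>0 is c_opt = C50/(√α−1), and the corresponding optimal duration is T_opt = T₂·ln(10)·LR_target/(ln(2)(√α−1)), where T₂=ln(2)/r. -/
/-- For the `E_max` model `k(c) = k_max·c/(C50 + c)` with `α = k_max/r > 1`:
the unique maximizer over `c > 0` of `(k(c)−r)/c` is `c_opt = C50/(√α − 1)`,
and the optimal duration `T_opt = ln(10)·LR_target/(k(c_opt)−r)` equals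
`T₂·ln(10)·LR_target/(ln(2)(√α−1))`, where `T₂ = ln(2)/r`. -/
theorem stmt_13 (kmax r C50 LRtarget : ℝ)
    (hC50 : 0 < C50) (hr : 0 < r) (hkr : r < kmax) (hLR : 0 < LRtarget) :
    let α := kmax / r
    let kE : ℝ → ℝ := fun c => kmax * c / (C50 + c)
    let T₂ := Real.log 2 / r
    let copt := C50 / (Real.sqrt α - 1)
    (0 < copt ∧
      (∀ x : ℝ, 0 < x → (kE x - r) / x ≤ (kE copt - r) / copt) ∧
      (∀ x : ℝ, 0 < x → x ≠ copt → (kE x - r) / x < (kE copt - r) / copt)) ∧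
    Real.log 10 * LRtarget / (kE copt - r)
      = T₂ * (Real.log 10 * LRtarget) / (Real.log 2 * (Real.sqrt α - 1)) := by
  intro α kE T₂ copt
  have hα : 1 < α := (one_lt_div hr).mpr hkr
  set s := Real.sqrt α with hs
  have hs2 : s ^ 2 = α := Real.sq_sqrt (by linarith)
  have hs1 : 1 < s := by
    nlinarith [Real.sqrt_nonneg α, hs2]
  have hsm : 0 < s - 1 := by linarith
  have hkmax : kmax = r * s ^ 2 := by
    rw [hs2]; rw [mul_comm, div_mul_cancel₀ kmax hr.ne']
  have hcopt : 0 < copt := div_pos hC50 hsm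
  have hcden : C50 + copt > 0 := by linarith
  have hkE : kE copt - r = r * (s - 1) := by
    show kmax * copt / (C50 + copt) - r = r * (s - 1)
    have : copt = C50 / (s - 1) := rfl
    rw [this] at hcden ⊢
    rw [hkmax]
    field_simp [hsm.ne']
    ring
  constructor
  · refine ⟨hcopt, ?_, ?_⟩
    · intro x hx
      have hdx : 0 < C50 + x := by linarith
      rw [hkE]
      show (kmax * x / (C50 + x) - r) / x ≤ r * (s - 1) / copt
      rw [div_le_div_iff₀ hx hcopt]
      have hco : copt * (s - 1) = C50 := by
        show C50 / (s - 1) * (s - 1) = C50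
        field_simp
      have key : ((s - 1) * x - C50) ^ 2 ≥ 0 := sq_nonneg _
      rw [div_sub' hdx.ne', div_mul_eq_mul_div, div_le_iff₀ hdx]
      rw [← mul_le_mul_iff_of_pos_right hsm, mul_assoc _ copt, hco, hkmax]
      nlinarith [mul_nonneg hr.le key]
    · intro x hx hne
      have hdx : 0 < C50 + x := by linarith
      rw [hkE]
      show (kmax * x / (C50 + x) - r) / x < r * (s - 1) / copt
      rw [div_lt_div_iff₀ hx hcopt]
      have hco : copt * (s - 1) = C50 := by
        show C50 / (s - 1) * (s - 1) = C50
        field_simp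
      have hne' : (s - 1) * x - C50 ≠ 0 := by
        intro h
        apply hne
        have : x = C50 / (s - 1) := by
          field_simp
          linarith
        exact this
      have key : ((s - 1) * x - C50) ^ 2 > 0 := by positivity
      rw [div_sub' hdx.ne', div_mul_eq_mul_div, div_lt_iff₀ hdx]
      rw [← mul_lt_mul_iff_of_pos_right hsm, mul_assoc _ copt, hco, hkmax]
      nlinarith [mul_pos hr key]
  · rw [hkE]
    show Real.log 10 * LRtarget / (r * (s - 1))
        = Real.log 2 / r * (Real.log 10 * LRtarget) / (Real.log 2 * (s - 1))
    have h2 : Real.log 2 ≠ 0 := by positivity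
    field_simp
end

section
/- For the Hill function with fixed γ≤1 (concave case), the optimal concentration c_opt(α) given by the explicit formula is monotone decreasing in α on (1,∞), tends to +∞ as α→1⁺, and tends to 0 as α→∞. -/
open Real Filter Set Topology


/-- auxiliary: `u(α) = αb + √(α²b² + γα)` with `b = (γ-1)/2`. -/
noncomputable def stmt14_u (γ α : ℝ) : ℝ :=
  α * ((γ - 1) / 2) + Real.sqrt ((α * ((γ - 1) / 2)) ^ 2 + γ * α)

lemma stmt14_s_sq {γ α : ℝ} (hγ : 0 < γ) (hα : 0 < α) :
    (Real.sqrt ((α * ((γ - 1) / 2)) ^ 2 + γ * α)) ^ 2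
      = (α * ((γ - 1) / 2)) ^ 2 + γ * α := by
  apply Real.sq_sqrt
  positivity

lemma stmt14_u_sq {γ α : ℝ} (hγ : 0 < γ) (hα : 0 < α) :
    (stmt14_u γ α) ^ 2 = α * (γ + (γ - 1) * stmt14_u γ α) := by
  have hs := stmt14_s_sq hγ hα
  unfold stmt14_u
  set s := Real.sqrt ((α * ((γ - 1) / 2)) ^ 2 + γ * α) with hsdef
  nlinarith [hs]

lemma stmt14_u_pos {γ α : ℝ} (hγ : 0 < γ) (hγ1 : γ ≤ 1) (hα : 0 < α) :
    0 < stmt14_u γ α := by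
  have hs := stmt14_s_sq hγ hα
  have hsn : 0 ≤ Real.sqrt ((α * ((γ - 1) / 2)) ^ 2 + γ * α) := Real.sqrt_nonneg _
  unfold stmt14_u
  set s := Real.sqrt ((α * ((γ - 1) / 2)) ^ 2 + γ * α) with hsdef
  nlinarith [mul_pos hγ hα, sq_nonneg s]

lemma stmt14_u_gt {γ α : ℝ} (hγ : 0 < γ) (hγ1 : γ ≤ 1) (hα : 1 < α) :
    γ < stmt14_u γ α := by
  have hα0 : (0:ℝ) < α := lt_trans one_pos hα
  have hsq := stmt14_u_sq hγ hα0
  have hpos := stmt14_u_pos hγ hγ1 hα0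
  set u := stmt14_u γ α
  -- (u - γ)(u + γ - α(γ-1)) = γ²(α-1) > 0, second factor positive
  have h2 : 0 < u + γ - α * (γ - 1) := by nlinarith
  nlinarith [mul_pos (mul_pos hγ hγ) (sub_pos.mpr hα)]

lemma stmt14_key {γ : ℝ} (hγ : 0 < γ) (hγ1 : γ ≤ 1) (x : ℝ) (hx : 0 < x) :
    -((γ - 1) / 2) * Real.sqrt ((x * ((γ - 1) / 2)) ^ 2 + γ * x)
      < x * ((γ - 1) / 2) ^ 2 + γ / 2 := by
  have hs := stmt14_s_sq hγ hx
  have hsn : 0 ≤ Real.sqrt ((x * ((γ - 1) / 2)) ^ 2 + γ * x) := Real.sqrt_nonneg _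
  set s := Real.sqrt ((x * ((γ - 1) / 2)) ^ 2 + γ * x) with hsdef
  have hb : (γ - 1) / 2 ≤ 0 := by linarith
  have hX : 0 < x * ((γ - 1) / 2) ^ 2 + γ / 2 := by positivity
  have hY : 0 ≤ -((γ - 1) / 2) * s := mul_nonneg (neg_nonneg.mpr hb) hsn
  nlinarith [hX, hY, hs]

lemma stmt14_u_mono {γ : ℝ} (hγ : 0 < γ) (hγ1 : γ ≤ 1) {α β : ℝ}
    (hα : 0 < α) (hβ : α < β) : stmt14_u γ α < stmt14_u γ β := by
  have hβ0 : (0:ℝ) < β := lt_trans hα hβ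
  have hsa := stmt14_s_sq hγ hα
  have hsb := stmt14_s_sq hγ hβ0
  have hsan : 0 ≤ Real.sqrt ((α * ((γ - 1) / 2)) ^ 2 + γ * α) := Real.sqrt_nonneg _
  have hsbn : 0 ≤ Real.sqrt ((β * ((γ - 1) / 2)) ^ 2 + γ * β) := Real.sqrt_nonneg _
  have hsap : 0 < Real.sqrt ((α * ((γ - 1) / 2)) ^ 2 + γ * α) := by
    rw [Real.sqrt_pos]; positivity
  have hka := stmt14_key hγ hγ1 α hα
  have hkb := stmt14_key hγ hγ1 β hβ0
  unfold stmt14_u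
  set sa := Real.sqrt ((α * ((γ - 1) / 2)) ^ 2 + γ * α) with hsadef
  set sb := Real.sqrt ((β * ((γ - 1) / 2)) ^ 2 + γ * β) with hsbdef
  nlinarith [hsa, hsb, hsan, hsbn, hsap, hka, hkb, sub_pos.mpr hβ,
    mul_pos (sub_pos.mpr hβ) hsap]


lemma stmt14_u_le {γ α : ℝ} (hγ : 0 < γ) (hγ1 : γ ≤ 1) (hα : 0 < α) :
    stmt14_u γ α ≤ Real.sqrt α := by
  have hsa := stmt14_s_sq hγ hα
  have ht2 : Real.sqrt (γ * α) ^ 2 = γ * α := Real.sq_sqrt (by positivity)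
  have htpos : 0 < Real.sqrt (γ * α) := by rw [Real.sqrt_pos]; positivity
  have hmono : Real.sqrt (γ * α) ≤ Real.sqrt ((α * ((γ - 1) / 2)) ^ 2 + γ * α) :=
    Real.sqrt_le_sqrt (by nlinarith [sq_nonneg (α * ((γ - 1) / 2))])
  have hout : Real.sqrt (γ * α) ≤ Real.sqrt α :=
    Real.sqrt_le_sqrt (by nlinarith)
  have hb : (γ - 1) / 2 ≤ 0 := by linarith
  have key : stmt14_u γ α ≤ Real.sqrt (γ * α) := by
    unfold stmt14_u
    set sa := Real.sqrt ((α * ((γ - 1) / 2)) ^ 2 + γ * α) with hsadef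
    set t := Real.sqrt (γ * α) with htdef
    have hba : 0 ≤ -(α * ((γ - 1) / 2)) := by
      rw [neg_nonneg]
      exact mul_nonpos_of_nonneg_of_nonpos hα.le hb
    have hsan : 0 ≤ sa := Real.sqrt_nonneg _
    have hR : 0 < sa + (t - α * ((γ - 1) / 2)) := by linarith
    nlinarith [hsa, ht2, hR, mul_nonneg hba htpos.le]
  exact key.trans hout

lemma stmt14_u_one {γ : ℝ} (hγ : 0 < γ) : stmt14_u γ 1 = γ := by
  unfold stmt14_u
  have h1 : (1 * ((γ - 1) / 2)) ^ 2 + γ * 1 = (γ - (γ - 1) / 2) ^ 2 := by ring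
  rw [h1, Real.sqrt_sq (by linarith)]
  ring

lemma stmt14_u_cont (γ : ℝ) : Continuous (stmt14_u γ) := by
  unfold stmt14_u
  fun_prop

lemma stmt14_h_eq {γ α : ℝ} (hγ : 0 < γ) (hγ1 : γ ≤ 1) (hα : 1 < α) :
    (1 + stmt14_u γ α) / (α - 1) = γ ^ 2 / (stmt14_u γ α - γ) + (γ - 1) := by
  have hα0 : (0:ℝ) < α := lt_trans one_pos hα
  have hu := stmt14_u_sq hγ hα0
  have hgt := stmt14_u_gt hγ hγ1 hα
  have h1 : α - 1 ≠ 0 := by linarith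
  have h2 : stmt14_u γ α - γ ≠ 0 := by linarith
  field_simp
  linear_combination hu

lemma stmt14_copt_eq {γ C50 α : ℝ} (hγ : 0 < γ) (hγ1 : γ ≤ 1) (hα : 1 < α) :
    C50 * (α - 1) ^ (-(1:ℝ) / γ) *
      (1 + α * ((γ - 1) / 2 + Real.sqrt (((γ - 1) / 2) ^ 2 + γ / α))) ^ ((1:ℝ) / γ)
    = C50 * ((1 + stmt14_u γ α) / (α - 1)) ^ ((1:ℝ) / γ) := by
  have hα0 : (0:ℝ) < α := lt_trans one_pos hα
  have h1 : α * ((γ - 1) / 2 + Real.sqrt (((γ - 1) / 2) ^ 2 + γ / α)) = stmt14_u γ α := by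
    unfold stmt14_u
    have h2 : Real.sqrt ((α * ((γ - 1) / 2)) ^ 2 + γ * α)
        = α * Real.sqrt (((γ - 1) / 2) ^ 2 + γ / α) := by
      rw [show (α * ((γ - 1) / 2)) ^ 2 + γ * α = α ^ 2 * (((γ - 1) / 2) ^ 2 + γ / α) by
        field_simp, Real.sqrt_mul (sq_nonneg α), Real.sqrt_sq hα0.le]
    rw [h2]; ring
  have hun : (0:ℝ) ≤ 1 + stmt14_u γ α := by
    linarith [stmt14_u_pos hγ hγ1 hα0]
  rw [h1, Real.div_rpow hun (by linarith : (0:ℝ) ≤ α - 1),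
    show -(1:ℝ) / γ = -((1:ℝ) / γ) by ring,
    Real.rpow_neg (by linarith : (0:ℝ) ≤ α - 1)]
  ring




/-- Proposition 1(a)(i), concave case `γ ≤ 1`: the explicit optimal
concentration `c_opt(α)` is strictly decreasing in `α` on `(1,∞)`, tends to
`+∞` as `α → 1⁺`, and tends to `0` as `α → ∞`. -/
theorem stmt_14 (γ C50 : ℝ) (hγ : 0 < γ) (hγ1 : γ ≤ 1) (hC50 : 0 < C50) :
    let copt : ℝ → ℝ := fun α => C50 * (α - 1) ^ (-(1:ℝ) / γ) *
      (1 + α * ((γ - 1) / 2 + Real.sqrt (((γ - 1) / 2) ^ 2 + γ / α))) ^ ((1:ℝ) / γ)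
    StrictAntiOn copt (Set.Ioi 1) ∧
    Filter.Tendsto copt (nhdsWithin 1 (Set.Ioi 1)) Filter.atTop ∧
    Filter.Tendsto copt Filter.atTop (nhds 0) := by
  intro copt
  have hγinv : (0:ℝ) < 1 / γ := by positivity
  have hcopt : ∀ α : ℝ, 1 < α →
      copt α = C50 * ((1 + stmt14_u γ α) / (α - 1)) ^ ((1:ℝ) / γ) := by
    intro α hα
    exact stmt14_copt_eq hγ hγ1 hα
  refine ⟨?_, ?_, ?_⟩
  · -- strict anti
    intro a ha b hb hab
    simp only [Set.mem_Ioi] at ha hb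
    rw [hcopt a ha, hcopt b hb]
    have hua := stmt14_u_gt hγ hγ1 ha
    have hub := stmt14_u_gt hγ hγ1 hb
    have hmono := stmt14_u_mono hγ hγ1 (lt_trans one_pos ha) hab
    have hhb : (1 + stmt14_u γ b) / (b - 1) < (1 + stmt14_u γ a) / (a - 1) := by
      rw [stmt14_h_eq hγ hγ1 ha, stmt14_h_eq hγ hγ1 hb]
      have h2 : γ ^ 2 / (stmt14_u γ b - γ) < γ ^ 2 / (stmt14_u γ a - γ) :=
        div_lt_div_of_pos_left (by positivity) (by linarith) (by linarith)
      linarith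
    have h0 : (0:ℝ) ≤ (1 + stmt14_u γ b) / (b - 1) := by
      apply div_nonneg
      · linarith [stmt14_u_pos hγ hγ1 (lt_trans one_pos hb)]
      · linarith
    exact mul_lt_mul_of_pos_left (Real.rpow_lt_rpow h0 hhb hγinv) hC50
  · -- tendsto at 1⁺
    have hu1 : Tendsto (fun α => stmt14_u γ α - γ) (𝓝[>] (1:ℝ)) (𝓝[>] (0:ℝ)) := by
      rw [tendsto_nhdsWithin_iff]
      constructor
      · have hc : Tendsto (fun α => stmt14_u γ α - γ) (𝓝 (1:ℝ))
            (𝓝 (stmt14_u γ 1 - γ)) :=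
          ((stmt14_u_cont γ).sub continuous_const).tendsto 1
        rw [stmt14_u_one hγ, sub_self] at hc
        exact hc.mono_left nhdsWithin_le_nhds
      · filter_upwards [self_mem_nhdsWithin] with α hα
        exact Set.mem_Ioi.mpr (sub_pos.mpr (stmt14_u_gt hγ hγ1 hα))
    have hF : Tendsto (fun α => C50 * ((γ ^ 2 * (stmt14_u γ α - γ)⁻¹ + (γ - 1)) ^ ((1:ℝ)/γ)))
        (𝓝[>] (1:ℝ)) atTop := by
      apply Tendsto.const_mul_atTop hC50
      apply (tendsto_rpow_atTop hγinv).comp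
      apply tendsto_atTop_add_const_right
      apply Tendsto.const_mul_atTop (by positivity : (0:ℝ) < γ ^ 2)
      exact tendsto_inv_nhdsGT_zero.comp hu1
    refine hF.congr' ?_
    filter_upwards [self_mem_nhdsWithin] with α hα
    rw [hcopt α hα, stmt14_h_eq hγ hγ1 hα, div_eq_mul_inv, div_eq_mul_inv]
  · -- tendsto at ∞
    have hsqrt : Tendsto Real.sqrt atTop atTop := by
      refine (tendsto_rpow_atTop (y := 1/2) (by norm_num)).congr fun x => ?_
      exact (Real.sqrt_eq_rpow x).symm
    have hbound : Tendsto (fun α : ℝ => (Real.sqrt α + (-1))⁻¹) atTop (𝓝 0) :=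
      (tendsto_atTop_add_const_right atTop (-1) hsqrt).inv_tendsto_atTop
    have hh0 : Tendsto (fun α : ℝ => (1 + stmt14_u γ α) / (α - 1)) atTop (𝓝 0) := by
      apply squeeze_zero' (g := fun α : ℝ => (Real.sqrt α + (-1))⁻¹)
      · filter_upwards [eventually_gt_atTop (1:ℝ)] with α hα
        apply div_nonneg
        · linarith [stmt14_u_pos hγ hγ1 (lt_trans one_pos hα)]
        · linarith
      · filter_upwards [eventually_gt_atTop (1:ℝ)] with α hα
        have hα0 : (0:ℝ) < α := lt_trans one_pos hα
        have h1 : (1:ℝ) < Real.sqrt α := by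
          rw [show (1:ℝ) = Real.sqrt 1 by simp]
          exact Real.sqrt_lt_sqrt (by norm_num) hα
        have h2 : (1 + stmt14_u γ α) / (α - 1) ≤ (1 + Real.sqrt α) / (α - 1) :=
          (div_le_div_iff_of_pos_right (by linarith)).mpr
            (by linarith [stmt14_u_le hγ hγ1 hα0])
        have h3 : (1 + Real.sqrt α) / (α - 1) = (Real.sqrt α + (-1))⁻¹ := by
          rw [inv_eq_one_div, div_eq_div_iff (by linarith) (by linarith)]
          have := Real.sq_sqrt hα0.le
          nlinarith [this]
        rw [← h3]
        exact h2
      · exact hbound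
    have hc : ContinuousAt (fun x : ℝ => x ^ ((1:ℝ)/γ)) 0 :=
      Real.continuousAt_rpow_const 0 _ (Or.inr hγinv.le)
    have h4 : Tendsto (fun α : ℝ => ((1 + stmt14_u γ α) / (α - 1)) ^ ((1:ℝ)/γ))
        atTop (𝓝 ((0:ℝ) ^ ((1:ℝ)/γ))) := hc.tendsto.comp hh0
    rw [Real.zero_rpow (ne_of_gt hγinv)] at h4
    have h5 := h4.const_mul C50
    rw [mul_zero] at h5
    refine h5.congr' ?_
    filter_upwards [eventually_gt_atTop (1:ℝ)] with α hα
    exact (hcopt α hα).symm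
end

section
/- For the Hill function with fixed γ>1 (sigmoidal case), c_opt(α) is monotone decreasing in α on (1,∞) with lim_{α→∞} c_opt(α) = C50·(γ−1)^{1/γ} > 0. -/
set_option maxRecDepth 8000 in
/-- Proposition 1(a)(ii), sigmoidal case `γ > 1`: the explicit optimal
concentration `c_opt(α)` is strictly decreasing in `α` on `(1,∞)` and tends to
`C50·(γ−1)^{1/γ} > 0` as `α → ∞`. -/
theorem stmt_15 (γ C50 : ℝ) (hγ : 1 < γ) (hC50 : 0 < C50) :
    let copt : ℝ → ℝ := fun α => C50 * (α - 1) ^ (-(1:ℝ) / γ) *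
      (1 + α * ((γ - 1) / 2 + Real.sqrt (((γ - 1) / 2) ^ 2 + γ / α))) ^ ((1:ℝ) / γ)
    StrictAntiOn copt (Set.Ioi 1) ∧
    Filter.Tendsto copt Filter.atTop (nhds (C50 * (γ - 1) ^ ((1:ℝ) / γ))) ∧
    0 < C50 * (γ - 1) ^ ((1:ℝ) / γ) := by
  intro copt
  have hγ0 : (0:ℝ) < γ := by linarith
  set b : ℝ := (γ - 1) / 2 with hbdef
  have hb0 : 0 < b := by simp only [hbdef]; linarith
  set c : ℝ := γ - 1 with hcdef
  have hc0 : 0 < c := by simp only [hcdef]; linarith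
  have hcb : c = 2 * b := by simp only [hbdef, hcdef]; ring
  set s : ℝ → ℝ := fun α => Real.sqrt (b ^ 2 + γ / α) with hsdef
  set N : ℝ → ℝ := fun α => 1 + α * (b + s α) with hNdef
  set F : ℝ → ℝ := fun α => N α / (α - 1) with hFdef
  -- basic facts for α > 1
  have hs0 : ∀ α : ℝ, 0 < α → 0 ≤ s α := fun α hα => Real.sqrt_nonneg _
  have hs2 : ∀ α : ℝ, 0 < α → α * (s α) ^ 2 = α * b ^ 2 + γ := by
    intro α hα
    have : (s α) ^ 2 = b ^ 2 + γ / α := by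
      simp only [hsdef]
      exact Real.sq_sqrt (by positivity)
    rw [this]; field_simp
  have hN0 : ∀ α : ℝ, 0 < α → 0 < N α := by
    intro α hα
    have := hs0 α hα
    simp only [hNdef]
    nlinarith
  have hF0 : ∀ α : ℝ, 1 < α → 0 < F α := by
    intro α hα
    exact div_pos (hN0 α (by linarith)) (by linarith)
  -- quadratic identity
  have hquad : ∀ α : ℝ, 1 < α → (N α) ^ 2 = 2 * (1 + b * α) * N α + (α - 1) := by
    intro α hα
    have h2 := hs2 α (by linarith)
    simp only [hNdef]
    nlinarith [h2]
  -- key identity: α * F * (F - c) = (F + 1)^2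
  have hkey : ∀ α : ℝ, 1 < α → α * F α * (F α - c) = (F α + 1) ^ 2 := by
    intro α hα
    have h1 : α - 1 ≠ 0 := by linarith
    have hq := hquad α hα
    simp only [hFdef]
    clear_value s N F b c
    rw [hcb]
    field_simp
    linear_combination (α - 1) * hq
  -- F > c
  have hFc : ∀ α : ℝ, 1 < α → c < F α := by
    intro α hα
    have hk := hkey α hα
    have hF := hF0 α hα
    by_contra h
    push_neg at h
    have hαF : 0 < α * F α := mul_pos (by linarith) hF
    nlinarith [sq_nonneg (F α + 1)]
  -- strict anti of F
  have hFanti : ∀ α β : ℝ, 1 < α → 1 < β → α < β → F β < F α := by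
    intro α β hα hβ hab
    by_contra h
    push_neg at h
    set x := F α with hx
    set y := F β with hy
    have hxc : c < x := hFc α hα
    have hyc : c < y := hFc β hβ
    have hx0 : 0 < x := lt_trans hc0 hxc
    have hy0 : 0 < y := lt_trans hc0 hyc
    have kx : α * x * (x - c) = (x + 1) ^ 2 := hkey α hα
    have ky : β * y * (y - c) = (y + 1) ^ 2 := hkey β hβ
    have hfac : (x + 1) ^ 2 * (y * (y - c)) - (y + 1) ^ 2 * (x * (x - c))
        = (y - x) * ((2 + c) * x * y + x + y - c) := by ring
    have hposq : 0 < (2 + c) * x * y + x + y - c := by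
      nlinarith [mul_pos hx0 hy0, mul_pos (mul_pos hc0 hx0) hy0]
    have hge : 0 ≤ (y - x) * ((2 + c) * x * y + x + y - c) :=
      mul_nonneg (by linarith) hposq.le
    have hprod : 0 < (x * (x - c)) * (y * (y - c)) :=
      mul_pos (mul_pos hx0 (by linarith)) (mul_pos hy0 (by linarith))
    have hP : (x + 1) ^ 2 * (y * (y - c)) - (y + 1) ^ 2 * (x * (x - c))
        = (α - β) * ((x * (x - c)) * (y * (y - c))) := by
      linear_combination (x * (x - c)) * ky - (y * (y - c)) * kx
    have hneg : (α - β) * ((x * (x - c)) * (y * (y - c))) < 0 :=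
      mul_neg_of_neg_of_pos (by linarith) hprod
    linarith [hfac ▸ hge]
  -- limit of F at infinity
  have hFlim : Filter.Tendsto F Filter.atTop (nhds c) := by
    have h0 : Filter.Tendsto (fun α : ℝ => α⁻¹) Filter.atTop (nhds 0) :=
      tendsto_inv_atTop_zero
    have hg : Filter.Tendsto (fun t : ℝ => (t + b + Real.sqrt (b ^ 2 + γ * t)) / (1 - t))
        (nhds 0) (nhds c) := by
      have hca : ContinuousAt (fun t : ℝ => (t + b + Real.sqrt (b ^ 2 + γ * t)) / (1 - t)) 0 := by
        apply ContinuousAt.div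
        · fun_prop
        · fun_prop
        · norm_num
      have h := hca.tendsto
      have hval : ((0:ℝ) + b + Real.sqrt (b ^ 2 + γ * 0)) / (1 - 0) = c := by
        rw [mul_zero, add_zero, Real.sqrt_sq hb0.le]
        rw [hcb]; ring
      rwa [hval] at h
    have hcomp := hg.comp h0
    apply hcomp.congr'
    filter_upwards [Filter.eventually_gt_atTop (1:ℝ)] with α hα
    have hα0 : (0:ℝ) < α := lt_trans one_pos hα
    have hα1 : α - 1 ≠ 0 := by linarith
    have harg : b ^ 2 + γ * α⁻¹ = b ^ 2 + γ / α := by rw [div_eq_mul_inv]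
    show (α⁻¹ + b + Real.sqrt (b ^ 2 + γ * α⁻¹)) / (1 - α⁻¹) = F α
    rw [harg]
    simp only [hFdef, hNdef, hsdef]
    have hden : (0:ℝ) < 1 - α⁻¹ := by
      rw [sub_pos]
      exact inv_lt_one_of_one_lt₀ hα
    rw [div_eq_div_iff hden.ne' hα1]
    field_simp
    ring
  -- rewrite copt in terms of F
  have hcopt : ∀ α : ℝ, 1 < α → copt α = C50 * (F α) ^ ((1:ℝ) / γ) := by
    intro α hα
    have hα1 : (0:ℝ) < α - 1 := by linarith
    have hNpos := hN0 α (by linarith)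
    show C50 * (α - 1) ^ (-(1:ℝ) / γ) * (N α) ^ ((1:ℝ) / γ) = C50 * (F α) ^ ((1:ℝ) / γ)
    rw [hFdef]
    rw [Real.div_rpow hNpos.le hα1.le]
    rw [show (-(1:ℝ) / γ) = -((1:ℝ) / γ) by ring, Real.rpow_neg hα1.le]
    field_simp
  refine ⟨?_, ?_, ?_⟩
  · intro α hα β hβ hab
    simp only [Set.mem_Ioi] at hα hβ
    rw [hcopt α hα, hcopt β hβ]
    have h1 : F β < F α := hFanti α β hα hβ hab
    have h2 : 0 < F β := hF0 β hβ
    exact mul_lt_mul_of_pos_left (Real.rpow_lt_rpow h2.le h1 (by positivity)) hC50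
  · have hcont : ContinuousAt (fun x : ℝ => C50 * x ^ ((1:ℝ) / γ)) c := by
      apply ContinuousAt.mul continuousAt_const
      exact Real.continuousAt_rpow_const c ((1:ℝ)/γ) (Or.inl hc0.ne')
    have h := (hcont.tendsto.comp hFlim).congr'
      (by
        filter_upwards [Filter.eventually_gt_atTop (1:ℝ)] with α hα
        exact (hcopt α hα).symm)
    rwa [hcdef] at h
  · have : 0 < (γ - 1) ^ ((1:ℝ) / γ) := Real.rpow_pos_of_pos (by linarith) _
    positivity
end

section
/- Let C_bc(t)=c̄ for t≤T_bc and c̄·e^{−μ(t−T_bc)} for t>T_bc, with c̄>zMIC, μ>0, and k satisfying (A1)-(A2) with k_max>r. Then the maximal log-reduction is LR_max = (1/ln10)[T_bc·(k(c̄)−r) + μ^{-1}·∫_{zMIC}^{c̄} (k(u)−r)/u du], attained at T* = T_bc + (1/μ)·ln(c̄/zMIC), and the AUC of C_bc equals (μ^{-1}+T_bc)·c̄. -/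
open MeasureTheory

/-- Lemma 2: for the bolus+continuous concentration profile
`C_bc(t) = c̄` for `t ≤ T_bc`, `c̄·e^{−μ(t−T_bc)}` for `t > T_bc`, with
`c̄ > zMIC`, the maximal log-reduction equals
`(1/ln10)[T_bc·(k(c̄)−r) + μ⁻¹·∫_{zMIC}^{c̄}(k(u)−r)/u du]`, attained at
`T* = T_bc + μ⁻¹·ln(c̄/zMIC)`, and the AUC equals `(μ⁻¹ + T_bc)·c̄`. -/
theorem stmt_18 (k : ℝ → ℝ) (kmax r zMIC cbar μ Tbc : ℝ)
    (hk0 : k 0 = 0)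
    (hcont : ContinuousOn k (Set.Ici 0))
    (hmono : StrictMonoOn k (Set.Ici 0))
    (hlim : Filter.Tendsto k Filter.atTop (nhds kmax))
    (hr : 0 < r) (hkr : r < kmax)
    (hzMIC : 0 < zMIC) (hzMICr : k zMIC = r)
    (hcbar : zMIC < cbar) (hμ : 0 < μ) (hTbc : 0 ≤ Tbc) :
    let Cbc : ℝ → ℝ := fun t => if t ≤ Tbc then cbar else cbar * Real.exp (-μ * (t - Tbc))
    let LR : ℝ → ℝ := fun T => (1 / Real.log 10) * ∫ t in Set.Ioc 0 T, (k (Cbc t) - r)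
    let LRmax := (1 / Real.log 10) *
      (Tbc * (k cbar - r) + μ⁻¹ * ∫ u in zMIC..cbar, (k u - r) / u)
    let Tstar := Tbc + μ⁻¹ * Real.log (cbar / zMIC)
    (LR Tstar = LRmax ∧ ∀ T : ℝ, 0 ≤ T → LR T ≤ LRmax) ∧
    ∫ t in Set.Ioi 0, Cbc t = (μ⁻¹ + Tbc) * cbar := by
  intro Cbc LR LRmax Tstar
  have hc0 : 0 < cbar := hzMIC.trans hcbar
  have hlogpos : 0 < Real.log (cbar / zMIC) :=
    Real.log_pos (by rw [lt_div_iff₀ hzMIC]; linarith)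
  have hTs : Tbc < Tstar := by
    have : 0 < μ⁻¹ * Real.log (cbar / zMIC) := by positivity
    simp only [Tstar]; linarith
  have hTs0 : 0 ≤ Tstar := le_of_lt (lt_of_le_of_lt hTbc hTs)
  -- rewrite Cbc
  have hCbc_eq : Cbc = fun t => cbar * Real.exp (-μ * max (t - Tbc) 0) := by
    funext t
    simp only [Cbc]
    split_ifs with h
    · rw [max_eq_right (by linarith), mul_zero, Real.exp_zero, mul_one]
    · rw [max_eq_left (by linarith [not_le.mp h])]
  have hCbc_cont : Continuous Cbc := by
    rw [hCbc_eq]; fun_prop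
  have hCbc_pos : ∀ t, 0 < Cbc t := by
    intro t; rw [hCbc_eq]; positivity
  have hf_cont : Continuous (fun t => k (Cbc t) - r) := by
    refine Continuous.sub ?_ continuous_const
    refine continuous_iff_continuousAt.2 fun t => ?_
    exact (hcont.continuousAt (Ici_mem_nhds (hCbc_pos t))).comp hCbc_cont.continuousAt
  have hInt : ∀ a b : ℝ, IntervalIntegrable (fun t => k (Cbc t) - r) volume a b :=
    fun a b => hf_cont.intervalIntegrable a b
  -- key value at Tstar
  have hval : cbar * Real.exp (-μ * (Tstar - Tbc)) = zMIC := by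
    have h1 : -μ * (Tstar - Tbc) = - Real.log (cbar / zMIC) := by
      simp only [Tstar]; field_simp; ring
    rw [h1, Real.exp_neg, Real.exp_log (by positivity)]
    field_simp
  -- bounds on Cbc
  have hCbc_ge : ∀ t, t ≤ Tstar → zMIC ≤ Cbc t := by
    intro t ht
    simp only [Cbc]
    split_ifs with h
    · exact hcbar.le
    · calc zMIC = cbar * Real.exp (-μ * (Tstar - Tbc)) := hval.symm
        _ ≤ cbar * Real.exp (-μ * (t - Tbc)) := by
            apply mul_le_mul_of_nonneg_left _ hc0.le
            apply Real.exp_le_exp.2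
            nlinarith
  have hCbc_le : ∀ t, Tstar ≤ t → Cbc t ≤ zMIC := by
    intro t ht
    have htb : ¬ t ≤ Tbc := by linarith
    simp only [Cbc, if_neg htb]
    calc cbar * Real.exp (-μ * (t - Tbc)) ≤ cbar * Real.exp (-μ * (Tstar - Tbc)) := by
          apply mul_le_mul_of_nonneg_left _ hc0.le
          apply Real.exp_le_exp.2
          nlinarith
      _ = zMIC := hval
  have hf_nonneg : ∀ t, t ≤ Tstar → 0 ≤ k (Cbc t) - r := by
    intro t ht
    have := hmono.monotoneOn (Set.mem_Ici.2 hzMIC.le) (Set.mem_Ici.2 (hCbc_pos t).le) (hCbc_ge t ht)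
    rw [hzMICr] at this; linarith
  have hf_nonpos : ∀ t, Tstar ≤ t → k (Cbc t) - r ≤ 0 := by
    intro t ht
    have := hmono.monotoneOn (Set.mem_Ici.2 (hCbc_pos t).le) (Set.mem_Ici.2 hzMIC.le) (hCbc_le t ht)
    rw [hzMICr] at this; linarith
  -- LR as interval integral
  have hLR : ∀ T : ℝ, 0 ≤ T → LR T = (1 / Real.log 10) * ∫ t in (0:ℝ)..T, (k (Cbc t) - r) := by
    intro T h
    simp only [LR]
    rw [intervalIntegral.integral_of_le h]
  -- integral over [0, Tbc]
  have hI1 : ∫ t in (0:ℝ)..Tbc, (k (Cbc t) - r) = Tbc * (k cbar - r) := by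
    rw [intervalIntegral.integral_congr (g := fun _ => k cbar - r)]
    · simp [smul_eq_mul]; ring
    · intro t ht
      rw [Set.uIcc_of_le hTbc] at ht
      simp only [Cbc, if_pos ht.2]
  -- substitution for [Tbc, Tstar]
  have hI2 : ∫ t in Tbc..Tstar, (k (Cbc t) - r)
      = μ⁻¹ * ∫ u in zMIC..cbar, (k u - r) / u := by
    have huIcc : Set.uIcc Tbc Tstar = Set.Icc Tbc Tstar := Set.uIcc_of_le hTs.le
    -- replace Cbc by the smooth g on the interval
    have hcongr : Set.EqOn (fun t => k (Cbc t) - r)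
        (fun t => k (cbar * Real.exp (-μ * (t - Tbc))) - r) (Set.uIcc Tbc Tstar) := by
      intro t ht
      rw [huIcc] at ht
      simp only [Cbc]
      split_ifs with h
      · have : t = Tbc := le_antisymm h ht.1
        simp [this]
      · rfl
    rw [intervalIntegral.integral_congr hcongr]
    set g : ℝ → ℝ := fun t => cbar * Real.exp (-μ * (t - Tbc)) with hg
    have hderiv : ∀ x ∈ Set.uIcc Tbc Tstar, HasDerivAt g (-μ * g x) x := by
      intro x _
      have h1 : HasDerivAt (fun t : ℝ => -μ * (t - Tbc)) (-μ) x := by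
        simpa using ((hasDerivAt_id x).sub_const Tbc).const_mul (-μ)
      have h2 := (h1.exp).const_mul cbar
      refine h2.congr_deriv ?_
      show _ = -μ * (cbar * Real.exp (-μ * (x - Tbc))); ring
    have hgpos : ∀ x, 0 < g x := fun x => by positivity
    have himg : g '' (Set.uIcc Tbc Tstar) ⊆ Set.Icc zMIC cbar := by
      rintro _ ⟨t, ht, rfl⟩
      rw [huIcc] at ht
      constructor
      · rw [← hval]
        apply mul_le_mul_of_nonneg_left _ hc0.le
        exact Real.exp_le_exp.2 (by nlinarith [ht.2])
      · have h1 : Real.exp (-μ * (t - Tbc)) ≤ 1 := by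
          rw [← Real.exp_zero]; exact Real.exp_le_exp.2 (by nlinarith [ht.1])
        have h2 : cbar * Real.exp (-μ * (t - Tbc)) ≤ cbar * 1 := by nlinarith
        show cbar * Real.exp (-μ * (t - Tbc)) ≤ cbar
        linarith
    have hGcont : ContinuousOn (fun u => (k u - r) / (-μ * u)) (g '' (Set.uIcc Tbc Tstar)) := by
      apply ContinuousOn.mono _ himg
      apply ContinuousOn.div
      · exact (hcont.mono (fun u hu => le_trans hzMIC.le hu.1)).sub continuousOn_const
      · fun_prop
      · intro u hu
        have h0 : 0 < u := lt_of_lt_of_le hzMIC hu.1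
        simp only [neg_mul, neg_ne_zero]
        positivity
    have hgcont : Continuous g := by rw [hg]; fun_prop
    have hsub := intervalIntegral.integral_comp_smul_deriv' hderiv
      ((continuous_const.mul hgcont).continuousOn) hGcont
    have heq : ∀ x, (-μ * g x) • ((fun u => (k u - r) / (-μ * u)) ∘ g) x = k (g x) - r := by
      intro x
      have h0 : -μ * g x ≠ 0 := by
        have := hgpos x; intro hcontra; nlinarith
      simp only [Function.comp, smul_eq_mul]
      field_simp
      exact mul_div_cancel_left₀ _ (hgpos x).ne'
    simp only [heq] at hsub
    rw [hsub]
    have hgT : g Tbc = cbar := by simp [hg]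
    have hgS : g Tstar = zMIC := hval
    rw [hgT, hgS]
    rw [intervalIntegral.integral_symm]
    have : ∀ u, (k u - r) / (-μ * u) = -(μ⁻¹ * ((k u - r) / u)) := by
      intro u
      rcases eq_or_ne u 0 with rfl | hu
      · simp
      · field_simp
    simp only [this, intervalIntegral.integral_neg, intervalIntegral.integral_const_mul]
    ring
  -- part 1 : LR Tstar = LRmax
  have hpart1 : LR Tstar = LRmax := by
    rw [hLR _ hTs0, ← intervalIntegral.integral_add_adjacent_intervals (hInt 0 Tbc) (hInt Tbc Tstar),
      hI1, hI2]
  refine ⟨⟨hpart1, ?_⟩, ?_⟩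
  · -- maximality
    intro T hT
    rw [← hpart1, hLR _ hT, hLR _ hTs0]
    have hc : 0 ≤ 1 / Real.log 10 := by
      have : (0:ℝ) < Real.log 10 := Real.log_pos (by norm_num)
      positivity
    apply mul_le_mul_of_nonneg_left _ hc
    rcases le_or_gt T Tstar with h | h
    · rw [← intervalIntegral.integral_add_adjacent_intervals (hInt 0 T) (hInt T Tstar)]
      have : 0 ≤ ∫ t in T..Tstar, (k (Cbc t) - r) :=
        intervalIntegral.integral_nonneg h (fun u hu => hf_nonneg u hu.2)
      linarith
    · rw [← intervalIntegral.integral_add_adjacent_intervals (hInt 0 Tstar) (hInt Tstar T)]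
      have hneg : 0 ≤ ∫ t in Tstar..T, -(k (Cbc t) - r) :=
        intervalIntegral.integral_nonneg h.le
          (fun u hu => by have := hf_nonpos u hu.1; linarith)
      rw [intervalIntegral.integral_neg] at hneg
      linarith
  · -- AUC
    have hsplit : Set.Ioc (0:ℝ) Tbc ∪ Set.Ioi Tbc = Set.Ioi 0 := Set.Ioc_union_Ioi_eq_Ioi hTbc
    -- integral on Ioi Tbc
    set F : ℝ → ℝ := fun t => -(cbar * μ⁻¹) * Real.exp (-μ * (t - Tbc)) with hF
    have hFd : ∀ x ∈ Set.Ici Tbc, HasDerivAt F (cbar * Real.exp (-μ * (x - Tbc))) x := by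
      intro x _
      have h1 : HasDerivAt (fun t : ℝ => -μ * (t - Tbc)) (-μ) x := by
        simpa using ((hasDerivAt_id x).sub_const Tbc).const_mul (-μ)
      have h2 := (h1.exp).const_mul (-(cbar * μ⁻¹))
      refine h2.congr_deriv ?_
      linear_combination (cbar * Real.exp (-μ * (x - Tbc))) * inv_mul_cancel₀ hμ.ne'
    have hFlim : Filter.Tendsto F Filter.atTop (nhds 0) := by
      rw [hF]
      have h1 : Filter.Tendsto (fun t : ℝ => -μ * (t - Tbc)) Filter.atTop Filter.atBot := by
        apply Filter.Tendsto.const_mul_atTop_of_neg (by linarith : -μ < 0)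
        exact Filter.tendsto_atTop_add_const_right _ _ Filter.tendsto_id
      have h2 := Real.tendsto_exp_atBot.comp h1
      have := h2.const_mul (-(cbar * μ⁻¹))
      simpa using this
    have hIoi : ∫ t in Set.Ioi Tbc, cbar * Real.exp (-μ * (t - Tbc)) = μ⁻¹ * cbar := by
      rw [MeasureTheory.integral_Ioi_of_hasDerivAt_of_nonneg' hFd
        (fun x _ => by positivity) hFlim]
      simp [hF]
      ring
    have hIoiCbc : ∫ t in Set.Ioi Tbc, Cbc t = μ⁻¹ * cbar := by
      rw [← hIoi]
      apply MeasureTheory.setIntegral_congr_fun measurableSet_Ioi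
      intro t ht
      simp only [Cbc, if_neg (not_le.2 (Set.mem_Ioi.1 ht))]
    have hIocCbc : ∫ t in Set.Ioc 0 Tbc, Cbc t = Tbc * cbar := by
      rw [MeasureTheory.setIntegral_congr_fun measurableSet_Ioc
        (g := fun _ => cbar) (fun t ht => by simp only [Cbc, if_pos ht.2])]
      simp [Real.volume_Ioc, ENNReal.toReal_ofReal hTbc, hTbc]
    -- combine
    have hint1 : IntegrableOn Cbc (Set.Ioc 0 Tbc) volume :=
      hCbc_cont.integrableOn_Ioc
    have hint2 : IntegrableOn Cbc (Set.Ioi Tbc) volume := by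
      have := MeasureTheory.integrableOn_Ioi_deriv_of_nonneg' hFd
        (fun x _ => by positivity) hFlim
      apply this.congr_fun _ measurableSet_Ioi
      intro t ht
      simp only [Cbc, if_neg (not_le.2 (Set.mem_Ioi.1 ht))]
    rw [← hsplit, MeasureTheory.setIntegral_union (Set.Ioc_disjoint_Ioi le_rfl)
      measurableSet_Ioi hint1 hint2, hIocCbc, hIoiCbc]
    ring
end

section
/- Under (A1)-(A3), k_max>r, μ>0, define ρ=∫_{zMIC}^{c_opt}(k(u)−r)/u du, and suppose ρ < ln(10)·LR_target·μ. Then among all pairs (c̄,T_bc) with c̄≥zMIC, T_bc≥0 satisfying T_bc·(k(c̄)−r) + μ^{-1}∫_{zMIC}^{c̄}(k(u)−r)/u du = ln(10)·LR_target, the quantity (μ^{-1}+T_bc)·c̄ is minimized uniquely at c̄=c_opt and T_bc = (ln(10)·LR_target − μ^{-1}ρ)/(k(c_opt)−r), where c_opt is the maximizer of (k(c)−r)/c. -/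
open Set intervalIntegral

/-- Sign of `h(x) = k'(x)x - (k(x)-r)` on both sides of `copt`. -/
lemma aux_hsign (k k' k'' : ℝ → ℝ) (r copt : ℝ)
    (hk0 : k 0 = 0) (hcont : ContinuousOn k (Set.Ici 0))
    (hd1 : ∀ c > (0:ℝ), HasDerivAt k (k' c) c)
    (hd2 : ∀ c > (0:ℝ), HasDerivAt k' (k'' c) c)
    (hA3 : (∀ c > (0:ℝ), k'' c < 0) ∨
      (∃ cinfl > (0:ℝ), (∀ c : ℝ, 0 < c → c < cinfl → 0 < k'' c) ∧
        (∀ c : ℝ, cinfl < c → k'' c < 0)))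
    (hr : 0 < r)
    (hcopt : 0 < copt)
    (hcrit : k' copt = (k copt - r) / copt) :
    (∀ x : ℝ, 0 < x → x < copt → 0 < k' x * x - (k x - r)) ∧
    (∀ x : ℝ, copt < x → k' x * x - (k x - r) < 0) := by
  set h : ℝ → ℝ := fun x => k' x * x - (k x - r) with hhdef
  have hderiv : ∀ x > (0:ℝ), HasDerivAt h (k'' x * x) x := by
    intro x hx
    have h1 := (hd2 x hx).mul (hasDerivAt_id x)
    have h2 := (hd1 x hx).sub_const r
    have := h1.sub h2
    refine this.congr_deriv ?_
    simp only [id]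
    ring
  have hcopt0 : h copt = 0 := by
    simp only [hhdef]
    rw [hcrit]
    field_simp
    ring
  have hanti : ∀ a : ℝ, 0 < a → (∀ c : ℝ, a < c → k'' c < 0) →
      StrictAntiOn h (Set.Ici a) := by
    intro a ha hneg
    apply strictAntiOn_of_deriv_neg (convex_Ici a)
    · intro x hx
      exact (hderiv x (lt_of_lt_of_le ha hx)).continuousAt.continuousWithinAt
    · intro x hx
      rw [interior_Ici] at hx
      rw [(hderiv x (ha.trans hx)).deriv]
      exact mul_neg_of_neg_of_pos (hneg x hx) (ha.trans hx)
  rcases hA3 with hconc | ⟨cinfl, hci, hconv, hconc⟩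
  · -- globally concave: h strictly decreasing on (0,∞)
    have hanti' : StrictAntiOn h (Set.Ioi 0) := by
      apply strictAntiOn_of_deriv_neg (convex_Ioi 0)
      · intro x hx; exact (hderiv x hx).continuousAt.continuousWithinAt
      · intro x hx
        rw [interior_Ioi] at hx
        rw [(hderiv x hx).deriv]
        exact mul_neg_of_neg_of_pos (hconc x hx) hx
    constructor
    · intro x hx hxc
      have := hanti' (Set.mem_Ioi.mpr hx) (Set.mem_Ioi.mpr hcopt) hxc
      rw [hcopt0] at this; exact this
    · intro x hxc
      have := hanti' (Set.mem_Ioi.mpr hcopt) (Set.mem_Ioi.mpr (hcopt.trans hxc)) hxc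
      rw [hcopt0] at this; exact this
  · -- inflection case
    -- k' strictly increasing on (0, cinfl]
    have hk'mono : StrictMonoOn k' (Set.Ioc 0 cinfl) := by
      apply strictMonoOn_of_deriv_pos (convex_Ioc 0 cinfl)
      · intro x hx; exact (hd2 x hx.1).continuousAt.continuousWithinAt
      · intro x hx
        rw [interior_Ioc] at hx
        rw [(hd2 x hx.1).deriv]
        exact hconv x hx.1 hx.2
    -- on (0, cinfl], h ≥ r
    have hconvex_bound : ∀ x : ℝ, 0 < x → x ≤ cinfl → r ≤ h x := by
      intro x hx hxc
      obtain ⟨ξ, hξ, hslope⟩ := exists_hasDerivAt_eq_slope k k' hx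
        (hcont.mono (fun y hy => hy.1))
        (fun y hy => hd1 y hy.1)
      rw [hk0, sub_zero, sub_zero] at hslope
      have hξle : k' ξ ≤ k' x := by
        rcases eq_or_lt_of_le (hξ.2.le.trans hxc) with hh | hh
        · exact le_of_lt (hk'mono ⟨hξ.1, hξ.2.le.trans hxc⟩ ⟨hx, hxc⟩ hξ.2)
        · exact le_of_lt (hk'mono ⟨hξ.1, hξ.2.le.trans hxc⟩ ⟨hx, hxc⟩ hξ.2)
      have : k x ≤ k' x * x := by
        rw [hslope] at hξle
        exact (div_le_iff₀ hx).mp hξle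
      simp only [hhdef]; linarith
    -- copt > cinfl
    have hcic : cinfl < copt := by
      by_contra hle
      push_neg at hle
      have := hconvex_bound copt hcopt hle
      rw [hcopt0] at this; linarith
    have hanti' : StrictAntiOn h (Set.Ici cinfl) := hanti cinfl hci hconc
    constructor
    · intro x hx hxc
      rcases le_or_gt x cinfl with hh | hh
      · exact lt_of_lt_of_le hr (hconvex_bound x hx hh)
      · have := hanti' (Set.mem_Ici.mpr hh.le) (Set.mem_Ici.mpr hcic.le) hxc
        rw [hcopt0] at this; exact this
    · intro x hxc
      have := hanti' (Set.mem_Ici.mpr hcic.le) (Set.mem_Ici.mpr (hcic.le.trans hxc.le)) hxc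
      rw [hcopt0] at this; exact this

lemma aux_gderiv (k k' : ℝ → ℝ) (r : ℝ)
    (hd1 : ∀ c > (0:ℝ), HasDerivAt k (k' c) c) {x : ℝ} (hx : 0 < x) :
    HasDerivAt (fun u => (k u - r) / u) ((k' x * x - (k x - r)) / x ^ 2) x := by
  have := ((hd1 x hx).sub_const r).div (hasDerivAt_id x) hx.ne'
  refine this.congr_deriv ?_
  simp only [id]
  ring

lemma aux_gmono (k k' k'' : ℝ → ℝ) (r copt : ℝ)
    (hk0 : k 0 = 0) (hcont : ContinuousOn k (Set.Ici 0))
    (hd1 : ∀ c > (0:ℝ), HasDerivAt k (k' c) c)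
    (hd2 : ∀ c > (0:ℝ), HasDerivAt k' (k'' c) c)
    (hA3 : (∀ c > (0:ℝ), k'' c < 0) ∨
      (∃ cinfl > (0:ℝ), (∀ c : ℝ, 0 < c → c < cinfl → 0 < k'' c) ∧
        (∀ c : ℝ, cinfl < c → k'' c < 0)))
    (hr : 0 < r)
    (hcopt : 0 < copt)
    (hcrit : k' copt = (k copt - r) / copt) :
    StrictMonoOn (fun x => (k x - r) / x) (Set.Ioc 0 copt) ∧
    StrictAntiOn (fun x => (k x - r) / x) (Set.Ici copt) := by
  obtain ⟨hpos, hneg⟩ := aux_hsign k k' k'' r copt hk0 hcont hd1 hd2 hA3 hr hcopt hcrit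
  constructor
  · apply strictMonoOn_of_deriv_pos (convex_Ioc 0 copt)
    · intro x hx
      exact (aux_gderiv k k' r hd1 hx.1).continuousAt.continuousWithinAt
    · intro x hx
      rw [interior_Ioc] at hx
      rw [(aux_gderiv k k' r hd1 hx.1).deriv]
      exact div_pos (hpos x hx.1 hx.2) (pow_pos hx.1 2)
  · apply strictAntiOn_of_deriv_neg (convex_Ici copt)
    · intro x hx
      exact (aux_gderiv k k' r hd1 (hcopt.trans_le hx)).continuousAt.continuousWithinAt
    · intro x hx
      rw [interior_Ici] at hx
      rw [(aux_gderiv k k' r hd1 (hcopt.trans hx)).deriv]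
      exact div_neg_of_neg_of_pos (hneg x hx) (pow_pos (hcopt.trans hx) 2)


/-- Theorem 3(i): under (A1)-(A3), `k_max > r > 0`, `μ > 0`, with
`ρ = ∫_{zMIC}^{c_opt}(k(u)−r)/u du < ln(10)·LR_target·μ`, among all pairs
`(c̄, T_bc)` with `c̄ ≥ zMIC`, `T_bc ≥ 0` satisfying the eradication constraint
`T_bc·(k(c̄)−r) + μ⁻¹∫_{zMIC}^{c̄}(k(u)−r)/u du = ln(10)·LR_target`, the AUC
`(μ⁻¹ + T_bc)·c̄` is minimized uniquely at `c̄ = c_opt`,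
`T_bc = (ln(10)·LR_target − μ⁻¹ρ)/(k(c_opt)−r)`. -/
theorem stmt_19 (k k' k'' : ℝ → ℝ) (kmax r zMIC copt μ LRtarget : ℝ)
    (hk0 : k 0 = 0)
    (hcont : ContinuousOn k (Set.Ici 0))
    (hmono : StrictMonoOn k (Set.Ici 0))
    (hd1 : ∀ c > (0:ℝ), HasDerivAt k (k' c) c)
    (hd2 : ∀ c > (0:ℝ), HasDerivAt k' (k'' c) c)
    (hlim : Filter.Tendsto k Filter.atTop (nhds kmax))
    (hA3 : (∀ c > (0:ℝ), k'' c < 0) ∨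
      (∃ cinfl > (0:ℝ), (∀ c : ℝ, 0 < c → c < cinfl → 0 < k'' c) ∧
        (∀ c : ℝ, cinfl < c → k'' c < 0)))
    (hr : 0 < r) (hkr : r < kmax)
    (hμ : 0 < μ) (hLR : 0 < LRtarget)
    (hzMIC : 0 < zMIC) (hzMICr : k zMIC = r)
    (hcopt : 0 < copt)
    (hcrit : k' copt = (k copt - r) / copt)
    (hmax : ∀ x : ℝ, 0 < x → (k x - r) / x ≤ (k copt - r) / copt)
    (hρ : (∫ u in zMIC..copt, (k u - r) / u) < Real.log 10 * LRtarget * μ) :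
    let ρ := ∫ u in zMIC..copt, (k u - r) / u
    let Tbcopt := (Real.log 10 * LRtarget - μ⁻¹ * ρ) / (k copt - r)
    (zMIC ≤ copt ∧ 0 ≤ Tbcopt ∧
      Tbcopt * (k copt - r) + μ⁻¹ * ρ = Real.log 10 * LRtarget) ∧
    ∀ cbar Tbc : ℝ, zMIC ≤ cbar → 0 ≤ Tbc →
      Tbc * (k cbar - r) + μ⁻¹ * (∫ u in zMIC..cbar, (k u - r) / u)
        = Real.log 10 * LRtarget →
      (μ⁻¹ + Tbcopt) * copt ≤ (μ⁻¹ + Tbc) * cbar ∧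
      ((μ⁻¹ + Tbc) * cbar = (μ⁻¹ + Tbcopt) * copt → cbar = copt ∧ Tbc = Tbcopt) := by
  intro ρ Tbcopt
  have hρdef : ρ = ∫ u in zMIC..copt, (k u - r) / u := rfl
  have hTdef : Tbcopt = (Real.log 10 * LRtarget - μ⁻¹ * ρ) / (k copt - r) := rfl
  have hμinv : (0:ℝ) < μ⁻¹ := inv_pos.mpr hμ
  have hLpos : 0 < Real.log 10 * LRtarget :=
    mul_pos (Real.log_pos (by norm_num)) hLR
  -- k copt > r
  have hkcopt : 0 < k copt - r := by
    have h1 : ∀ᶠ x in Filter.atTop, r < k x := hlim.eventually (eventually_gt_nhds hkr)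
    obtain ⟨x, hx1, hx2⟩ := (h1.and (Filter.eventually_ge_atTop 1)).exists
    have hx : (0:ℝ) < x := by linarith
    have hgx : 0 < (k x - r) / x := div_pos (by linarith) hx
    have hgstar : 0 < (k copt - r) / copt := lt_of_lt_of_le hgx (hmax x hx)
    have := mul_pos hgstar hcopt
    rwa [div_mul_cancel₀ _ hcopt.ne'] at this
  have hgs_pos : 0 < (k copt - r) / copt := div_pos hkcopt hcopt
  have hzc : zMIC < copt := by
    have : k zMIC < k copt := by rw [hzMICr]; linarith
    exact (hmono.lt_iff_lt (Set.mem_Ici.mpr hzMIC.le) (Set.mem_Ici.mpr hcopt.le)).mp this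
  -- μ⁻¹ ρ < L
  have hρL : μ⁻¹ * ρ < Real.log 10 * LRtarget := by
    have h1 : μ⁻¹ * ρ < μ⁻¹ * (Real.log 10 * LRtarget * μ) :=
      mul_lt_mul_of_pos_left (hρdef ▸ hρ) hμinv
    have h2 : μ⁻¹ * (Real.log 10 * LRtarget * μ) = Real.log 10 * LRtarget := by
      field_simp
    linarith
  -- integrability
  have hInt : ∀ a b : ℝ, 0 < a → 0 < b →
      IntervalIntegrable (fun u => (k u - r) / u) MeasureTheory.volume a b := by
    intro a b ha hb
    apply ContinuousOn.intervalIntegrable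
    apply ContinuousOn.div
    · exact (hcont.mono (fun x hx => le_of_lt (lt_of_lt_of_le (lt_min ha hb) hx.1))).sub
        continuousOn_const
    · exact continuousOn_id
    · intro x hx
      exact (lt_of_lt_of_le (lt_min ha hb) hx.1).ne'
  obtain ⟨hgmono, hganti⟩ := aux_gmono k k' k'' r copt hk0 hcont hd1 hd2 hA3 hr hcopt hcrit
  have hTbcopt_pos : 0 ≤ Tbcopt := by
    rw [hTdef]
    exact le_of_lt (div_pos (by linarith) hkcopt)
  have hcon_opt : Tbcopt * (k copt - r) + μ⁻¹ * ρ = Real.log 10 * LRtarget := by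
    rw [hTdef, div_mul_cancel₀ _ (ne_of_gt hkcopt)]
    ring
  refine ⟨⟨hzc.le, hTbcopt_pos, hcon_opt⟩, ?_⟩
  intro cbar Tbc hcz hT hcon
  have hcbar0 : 0 < cbar := hzMIC.trans_le hcz
  -- cbar > zMIC
  have hcbargt : zMIC < cbar := by
    rcases eq_or_lt_of_le hcz with he | hlt
    · exfalso
      rw [← he, hzMICr, sub_self, mul_zero, intervalIntegral.integral_same, mul_zero,
        zero_add] at hcon
      linarith
    · exact hlt
  have hkcbar : 0 < k cbar - r := by
    have : k zMIC < k cbar :=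
      hmono (Set.mem_Ici.mpr hzMIC.le) (Set.mem_Ici.mpr hcbar0.le) hcbargt
    rw [hzMICr] at this; linarith
  have hgc_pos : 0 < (k cbar - r) / cbar := div_pos hkcbar hcbar0
  set F := ∫ u in zMIC..cbar, (k u - r) / u with hFdef
  have hTbc_eq : Tbc * (k cbar - r) = Real.log 10 * LRtarget - μ⁻¹ * F := by linarith
  have e1 : Tbcopt * copt = (Real.log 10 * LRtarget - μ⁻¹ * ρ) / ((k copt - r) / copt) := by
    rw [hTdef]
    field_simp
  have e2 : Tbc * cbar = (Real.log 10 * LRtarget - μ⁻¹ * F) / ((k cbar - r) / cbar) := by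
    rw [← hTbc_eq]
    field_simp
  have key : cbar ≠ copt →
      (μ⁻¹ + Tbcopt) * copt < (μ⁻¹ + Tbc) * cbar := by
    intro hne
    rw [add_mul, add_mul, e1, e2]
    rcases lt_or_gt_of_ne hne with hlt | hlt
    · -- cbar < copt
      have hgclt : (k cbar - r) / cbar < (k copt - r) / copt :=
        hgmono (Set.mem_Ioc.mpr ⟨hcbar0, hlt.le⟩) (Set.mem_Ioc.mpr ⟨hcopt, le_refl _⟩) hlt
      have a1 : (Real.log 10 * LRtarget - μ⁻¹ * ρ) / ((k copt - r) / copt)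
          < (Real.log 10 * LRtarget - μ⁻¹ * ρ) / ((k cbar - r) / cbar) :=
        div_lt_div_of_pos_left (by linarith) hgc_pos hgclt
      set I := ∫ u in cbar..copt, (k u - r) / u with hIdef
      have hFI : F + I = ρ :=
        intervalIntegral.integral_add_adjacent_intervals
          (hInt zMIC cbar hzMIC hcbar0) (hInt cbar copt hcbar0 hcopt)
      have hIlow : (k cbar - r) / cbar * (copt - cbar) ≤ I := by
        have hcmp : ∀ x ∈ Set.Icc cbar copt,
            (fun _ : ℝ => (k cbar - r) / cbar) x ≤ (k x - r) / x := by
          intro x hx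
          exact hgmono.monotoneOn (Set.mem_Ioc.mpr ⟨hcbar0, hlt.le⟩)
            (Set.mem_Ioc.mpr ⟨hcbar0.trans_le hx.1, hx.2⟩) hx.1
        have := intervalIntegral.integral_mono_on hlt.le intervalIntegrable_const
          (hInt cbar copt hcbar0 hcopt) hcmp
        rw [intervalIntegral.integral_const, smul_eq_mul] at this
        rw [mul_comm]
        exact this
      have a2 : copt - cbar ≤ I / ((k cbar - r) / cbar) :=
        (le_div_iff₀ hgc_pos).mpr (by linarith)
      have a3 : (Real.log 10 * LRtarget - μ⁻¹ * F) / ((k cbar - r) / cbar)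
          = (Real.log 10 * LRtarget - μ⁻¹ * ρ) / ((k cbar - r) / cbar)
            + μ⁻¹ * (I / ((k cbar - r) / cbar)) := by
        have hF : F = ρ - I := by linarith
        rw [hF]
        field_simp
        ring
      have a4 : μ⁻¹ * (copt - cbar) ≤ μ⁻¹ * (I / ((k cbar - r) / cbar)) :=
        mul_le_mul_of_nonneg_left a2 hμinv.le
      rw [a3]
      linarith
    · -- copt < cbar
      set I := ∫ u in copt..cbar, (k u - r) / u with hIdef
      have hFI : ρ + I = F :=
        intervalIntegral.integral_add_adjacent_intervals
          (hInt zMIC copt hzMIC hcopt) (hInt copt cbar hcopt hcbar0)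
      have hIupper : I < (k copt - r) / copt * (cbar - copt) := by
        have hpos : 0 < ∫ u in copt..cbar, ((k copt - r) / copt - (k u - r) / u) := by
          apply intervalIntegral.intervalIntegral_pos_of_pos_on
            (intervalIntegrable_const.sub (hInt copt cbar hcopt hcbar0))
          · intro x hx
            have := hganti (Set.mem_Ici.mpr le_rfl) (Set.mem_Ici.mpr hx.1.le) hx.1
            simpa using sub_pos.mpr this
          · exact hlt
        rw [intervalIntegral.integral_sub intervalIntegrable_const
          (hInt copt cbar hcopt hcbar0), intervalIntegral.integral_const, smul_eq_mul]
          at hpos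
        rw [mul_comm] at hpos ⊢
        linarith
      have hLF : 0 ≤ Real.log 10 * LRtarget - μ⁻¹ * F := by
        rw [← hTbc_eq]
        exact mul_nonneg hT hkcbar.le
      have hgc_le : (k cbar - r) / cbar ≤ (k copt - r) / copt := hmax cbar hcbar0
      have b1 : (Real.log 10 * LRtarget - μ⁻¹ * F) / ((k copt - r) / copt)
          ≤ (Real.log 10 * LRtarget - μ⁻¹ * F) / ((k cbar - r) / cbar) :=
        div_le_div_of_nonneg_left hLF hgc_pos hgc_le
      have b2 : I / ((k copt - r) / copt) < cbar - copt :=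
        (div_lt_iff₀ hgs_pos).mpr (by linarith)
      have b3 : (Real.log 10 * LRtarget - μ⁻¹ * F) / ((k copt - r) / copt)
          = (Real.log 10 * LRtarget - μ⁻¹ * ρ) / ((k copt - r) / copt)
            - μ⁻¹ * (I / ((k copt - r) / copt)) := by
        have hF : F = ρ + I := by linarith
        rw [hF]
        field_simp
        ring
      have b4 : μ⁻¹ * (I / ((k copt - r) / copt)) < μ⁻¹ * (cbar - copt) :=
        mul_lt_mul_of_pos_left b2 hμinv
      linarith
  constructor
  · rcases eq_or_ne cbar copt with he | hne
    · subst he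
      have hTeq : Tbc = Tbcopt := by
        apply mul_right_cancel₀ (ne_of_gt hkcbar)
        rw [hTbc_eq]
        have : F = ρ := hρdef
        rw [this]
        rw [hTdef, div_mul_cancel₀ _ (ne_of_gt hkcbar)]
      rw [hTeq]
    · exact (key hne).le
  · intro heq
    rcases eq_or_ne cbar copt with he | hne
    · subst he
      have hTeq : Tbc = Tbcopt := by
        apply mul_right_cancel₀ (ne_of_gt hkcbar)
        rw [hTbc_eq]
        have : F = ρ := hρdef
        rw [this]
        rw [hTdef, div_mul_cancel₀ _ (ne_of_gt hkcbar)]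
      exact ⟨rfl, hTeq⟩
    · exact absurd heq (key hne).ne'
end
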